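/- For lag times τ' > τ > 0, the autoinformation gap of a representation of a Markov chain at lag τ' is bounded by the sum of two gaps at lag τ: AIG(z_t; τ') ≤ AIG(z_t; τ) + AIG(z_{t+τ'−τ}; τ). -/

import Mathlib

open Finset

/-- Probability mass function of a random variable `X : Ω → α` under the weight `μ`. -/
def pmfOf {Ω α : Type} [Fintype Ω] [DecidableEq α] (μ : Ω → ℝ) (X : Ω → α) (a : α) : ℝ :=
  ∑ ω ∈ Finset.univ.filter (fun ω => X ω = a), μ ω

/-- `μ` is a probability mass function on the finite sample space `Ω`. -/
def IsPMF {Ω : Type} [Fintype Ω] (μ : Ω → ℝ) : Prop :=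
  (∀ ω, 0 ≤ μ ω) ∧ ∑ ω, μ ω = 1

/-- Mutual information `I(X; Y)` of two finite-valued random variables. -/
noncomputable def mi {Ω α β : Type} [Fintype Ω] [Fintype α] [DecidableEq α]
    [Fintype β] [DecidableEq β] (μ : Ω → ℝ) (X : Ω → α) (Y : Ω → β) : ℝ :=
  ∑ a : α, ∑ b : β,
    pmfOf μ (fun ω => (X ω, Y ω)) (a, b) *
      Real.log (pmfOf μ (fun ω => (X ω, Y ω)) (a, b) / (pmfOf μ X a * pmfOf μ Y b))

/-- Conditional mutual information `I(X; Y | Z)` of finite-valued random variables. -/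
noncomputable def cmi {Ω α β γ : Type} [Fintype Ω] [Fintype α] [DecidableEq α]
    [Fintype β] [DecidableEq β] [Fintype γ] [DecidableEq γ]
    (μ : Ω → ℝ) (X : Ω → α) (Y : Ω → β) (Z : Ω → γ) : ℝ :=
  ∑ a : α, ∑ b : β, ∑ c : γ,
    pmfOf μ (fun ω => (X ω, Y ω, Z ω)) (a, b, c) *
      Real.log (pmfOf μ (fun ω => (X ω, Y ω, Z ω)) (a, b, c) * pmfOf μ Z c /
        (pmfOf μ (fun ω => (X ω, Z ω)) (a, c) * pmfOf μ (fun ω => (Y ω, Z ω)) (b, c)))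

/-- Conditional pmf `P(X = a | Y = b)`. -/
noncomputable def condPMF {Ω α β : Type} [Fintype Ω] [DecidableEq α] [DecidableEq β]
    (μ : Ω → ℝ) (X : Ω → α) (Y : Ω → β) (a : α) (b : β) : ℝ :=
  pmfOf μ (fun ω => (X ω, Y ω)) (a, b) / pmfOf μ Y b

/-- Independence of two finite-valued random variables. -/
def IndepRV {Ω α β : Type} [Fintype Ω] [Fintype α] [DecidableEq α]
    [Fintype β] [DecidableEq β] (μ : Ω → ℝ) (X : Ω → α) (Y : Ω → β) : Prop :=
  ∀ a b, pmfOf μ (fun ω => (X ω, Y ω)) (a, b) = pmfOf μ X a * pmfOf μ Y b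

section AIGAux

variable {Ω α β γ δ : Type} [Fintype Ω]

/-- two random variables have the same fibers -/
def FibEq (X : Ω → α) (Y : Ω → β) : Prop := ∀ ω₁ ω₂, X ω₁ = X ω₂ ↔ Y ω₁ = Y ω₂

lemma fibEq_refl (X : Ω → α) : FibEq X X := fun _ _ => Iff.rfl

lemma pmf_nonneg [DecidableEq α] {μ : Ω → ℝ} (hμ : ∀ ω, 0 ≤ μ ω) (X : Ω → α) (a : α) :
    0 ≤ pmfOf μ X a := Finset.sum_nonneg fun ω _ => hμ ω

lemma pmf_congr [DecidableEq α] [DecidableEq β] (μ : Ω → ℝ) {X : Ω → α} {Y : Ω → β} {a : α}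
    {b : β} (h : ∀ ω, X ω = a ↔ Y ω = b) : pmfOf μ X a = pmfOf μ Y b := by
  unfold pmfOf
  exact Finset.sum_congr (by simp only [Finset.filter_congr (fun ω _ => h ω)]) fun _ _ => rfl

lemma sum_pmf_mul [Fintype α] [DecidableEq α] (μ : Ω → ℝ) (X : Ω → α) (L : α → ℝ) :
    ∑ a : α, pmfOf μ X a * L a = ∑ ω, μ ω * L (X ω) := by
  rw [← Finset.sum_fiberwise univ X (fun ω => μ ω * L (X ω))]
  refine Finset.sum_congr rfl fun a _ => ?_
  rw [pmfOf, Finset.sum_mul]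
  refine Finset.sum_congr rfl fun ω hω => ?_
  rw [(Finset.mem_filter.1 hω).2]

lemma sum_pmf [Fintype α] [DecidableEq α] (μ : Ω → ℝ) (X : Ω → α) :
    ∑ a : α, pmfOf μ X a = ∑ ω, μ ω := by
  simpa using sum_pmf_mul μ X (fun _ => 1)

lemma pmf_comp [Fintype γ] [DecidableEq γ] [DecidableEq δ] (μ : Ω → ℝ) (F : Ω → γ) (g : γ → δ)
    (b : δ) :
    pmfOf μ (fun ω => g (F ω)) b = ∑ y ∈ univ.filter (fun y => g y = b), pmfOf μ F y := by
  rw [Finset.sum_filter]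
  rw [show pmfOf μ (fun ω => g (F ω)) b = ∑ ω, if g (F ω) = b then μ ω else 0 by
    rw [pmfOf, Finset.sum_filter]]
  rw [← Finset.sum_fiberwise univ F (fun ω => if g (F ω) = b then μ ω else 0)]
  refine Finset.sum_congr rfl fun y _ => ?_
  by_cases hy : g y = b
  · simp only [hy, if_true, pmfOf]
    refine Finset.sum_congr rfl fun ω hω => ?_
    rw [(Finset.mem_filter.1 hω).2, hy, if_pos rfl]
  · simp only [hy, if_false]
    refine Finset.sum_eq_zero fun ω hω => ?_
    rw [(Finset.mem_filter.1 hω).2, if_neg hy]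

lemma obs_le [DecidableEq α] {μ : Ω → ℝ} (hμ : ∀ ω, 0 ≤ μ ω) (X : Ω → α) (ω₀ : Ω) :
    μ ω₀ ≤ pmfOf μ X (X ω₀) :=
  Finset.single_le_sum (fun ω _ => hμ ω) (by simp)

lemma pmf_le [DecidableEq α] [DecidableEq β] {μ : Ω → ℝ} (hμ : ∀ ω, 0 ≤ μ ω) {X : Ω → α}
    {Y : Ω → β} {a : α} {b : β} (h : ∀ ω, X ω = a → Y ω = b) : pmfOf μ X a ≤ pmfOf μ Y b :=
  Finset.sum_le_sum_of_subset_of_nonneg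
    (fun ω hω => by simp only [Finset.mem_filter, Finset.mem_univ, true_and] at *; exact h ω hω)
    (fun ω _ _ => hμ ω)

/-- probability of the observed value -/
noncomputable def pt [DecidableEq α] (μ : Ω → ℝ) (X : Ω → α) (ω : Ω) : ℝ := pmfOf μ X (X ω)

lemma pt_congr [DecidableEq α] [DecidableEq β] (μ : Ω → ℝ) {X : Ω → α} {Y : Ω → β}
    (h : FibEq X Y) : pt μ X = pt μ Y :=
  funext fun ω => pmf_congr μ (fun ω' => h ω' ω)

lemma pt_pos [DecidableEq α] {μ : Ω → ℝ} (hμ : ∀ ω, 0 ≤ μ ω) (X : Ω → α) {ω : Ω}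
    (hω : μ ω ≠ 0) : 0 < pt μ X ω :=
  lt_of_lt_of_le (lt_of_le_of_ne (hμ ω) (Ne.symm hω)) (obs_le hμ X ω)

lemma mi_eq [Fintype α] [DecidableEq α] [Fintype β] [DecidableEq β] (μ : Ω → ℝ) (X : Ω → α)
    (Y : Ω → β) :
    mi μ X Y = ∑ ω, μ ω *
      Real.log (pt μ (fun ω => (X ω, Y ω)) ω / (pt μ X ω * pt μ Y ω)) := by
  have h := sum_pmf_mul μ (fun ω => (X ω, Y ω))
    (fun p => Real.log (pmfOf μ (fun ω => (X ω, Y ω)) p / (pmfOf μ X p.1 * pmfOf μ Y p.2)))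
  simp only [Fintype.sum_prod_type] at h
  exact h

lemma cmi_eq [Fintype α] [DecidableEq α] [Fintype β] [DecidableEq β] [Fintype γ] [DecidableEq γ]
    (μ : Ω → ℝ) (X : Ω → α) (Y : Ω → β) (W : Ω → γ) :
    cmi μ X Y W = ∑ ω, μ ω *
      Real.log (pt μ (fun ω => (X ω, Y ω, W ω)) ω * pt μ W ω /
        (pt μ (fun ω => (X ω, W ω)) ω * pt μ (fun ω => (Y ω, W ω)) ω)) := by
  have h := sum_pmf_mul μ (fun ω => (X ω, Y ω, W ω))
    (fun p => Real.log (pmfOf μ (fun ω => (X ω, Y ω, W ω)) p * pmfOf μ W p.2.2 /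
      (pmfOf μ (fun ω => (X ω, W ω)) (p.1, p.2.2) * pmfOf μ (fun ω => (Y ω, W ω)) (p.2.1, p.2.2))))
  simp only [Fintype.sum_prod_type] at h
  exact h

lemma wsum_congr {μ L M : Ω → ℝ} (h : ∀ ω, μ ω ≠ 0 → L ω = M ω) :
    ∑ ω, μ ω * L ω = ∑ ω, μ ω * M ω :=
  Finset.sum_congr rfl fun ω _ => by
    by_cases hω : μ ω = 0
    · simp [hω]
    · rw [h ω hω]



section AIGAux2

set_option linter.unusedSectionVars false

variable {Ω α β γ δ : Type} [Fintype Ω] [Fintype α] [DecidableEq α]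
  [Fintype β] [DecidableEq β] [Fintype γ] [DecidableEq γ] [Fintype δ] [DecidableEq δ]

lemma fibEq_pair {X : Ω → α} {Y : Ω → β} {X' : Ω → γ} {Y' : Ω → δ}
    (h1 : FibEq X X') (h2 : FibEq Y Y') :
    FibEq (fun ω => (X ω, Y ω)) (fun ω => (X' ω, Y' ω)) := fun ω₁ ω₂ => by
  simp only [Prod.mk.injEq]
  exact and_congr (h1 ω₁ ω₂) (h2 ω₁ ω₂)

lemma cmi_congr (μ : Ω → ℝ) {X : Ω → α} {X' : Ω → β} {Y : Ω → γ} {W : Ω → δ}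
    (h1 : FibEq X X') : cmi μ X Y W = cmi μ X' Y W := by
  rw [cmi_eq, cmi_eq]
  refine Finset.sum_congr rfl fun ω _ => ?_
  rw [pt_congr μ (fibEq_pair h1 (fibEq_refl _)),
    pt_congr μ (fibEq_pair h1 (fibEq_refl W))]

lemma cmi_congr3 (μ : Ω → ℝ) {X : Ω → α} {Y : Ω → γ} {W : Ω → β} {W' : Ω → δ}
    (h3 : FibEq W W') : cmi μ X Y W = cmi μ X Y W' := by
  rw [cmi_eq, cmi_eq]
  refine Finset.sum_congr rfl fun ω _ => ?_
  rw [pt_congr μ (fibEq_pair (fibEq_refl X) (fibEq_pair (fibEq_refl Y) h3)),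
    pt_congr μ h3, pt_congr μ (fibEq_pair (fibEq_refl X) h3),
    pt_congr μ (fibEq_pair (fibEq_refl Y) h3)]

lemma cmi_comm (μ : Ω → ℝ) (X : Ω → α) (Y : Ω → β) (W : Ω → γ) :
    cmi μ X Y W = cmi μ Y X W := by
  rw [cmi_eq, cmi_eq]
  refine Finset.sum_congr rfl fun ω _ => ?_
  refine congrArg _ (congrArg Real.log ?_)
  rw [pt_congr μ (show FibEq (fun ω => (X ω, Y ω, W ω)) (fun ω => (Y ω, X ω, W ω)) from
    fun ω₁ ω₂ => by simp only [Prod.mk.injEq]; tauto)]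
  ring

lemma cmi_chain1 {μ : Ω → ℝ} (hμ0 : ∀ ω, 0 ≤ μ ω) (X : Ω → α) (Y : Ω → β) (U : Ω → γ)
    (W : Ω → δ) :
    cmi μ (fun ω => (X ω, Y ω)) U W = cmi μ X U W + cmi μ Y U (fun ω => (X ω, W ω)) := by
  rw [cmi_eq, cmi_eq, cmi_eq, ← Finset.sum_add_distrib]
  simp only [← mul_add]
  refine wsum_congr fun ω hω => ?_
  have e1 : pt μ (fun ω => ((X ω, Y ω), U ω, W ω)) = pt μ (fun ω => (X ω, Y ω, U ω, W ω)) :=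
    pt_congr μ (fun ω₁ ω₂ => by simp only [Prod.mk.injEq]; tauto)
  have e2 : pt μ (fun ω => (Y ω, U ω, X ω, W ω)) = pt μ (fun ω => (X ω, Y ω, U ω, W ω)) :=
    pt_congr μ (fun ω₁ ω₂ => by simp only [Prod.mk.injEq]; tauto)
  have e3 : pt μ (fun ω => ((X ω, Y ω), W ω)) = pt μ (fun ω => (X ω, Y ω, W ω)) :=
    pt_congr μ (fun ω₁ ω₂ => by simp only [Prod.mk.injEq]; tauto)
  have e4 : pt μ (fun ω => (Y ω, X ω, W ω)) = pt μ (fun ω => (X ω, Y ω, W ω)) :=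
    pt_congr μ (fun ω₁ ω₂ => by simp only [Prod.mk.injEq]; tauto)
  have e5 : pt μ (fun ω => (U ω, X ω, W ω)) = pt μ (fun ω => (X ω, U ω, W ω)) :=
    pt_congr μ (fun ω₁ ω₂ => by simp only [Prod.mk.injEq]; tauto)
  rw [e1, e2, e3, e4, e5]
  have h4 : 0 < pt μ (fun ω => (X ω, Y ω, U ω, W ω)) ω := pt_pos hμ0 _ hω
  have hxyw : 0 < pt μ (fun ω => (X ω, Y ω, W ω)) ω := pt_pos hμ0 _ hω
  have hxuw : 0 < pt μ (fun ω => (X ω, U ω, W ω)) ω := pt_pos hμ0 _ hω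
  have hxw : 0 < pt μ (fun ω => (X ω, W ω)) ω := pt_pos hμ0 _ hω
  have huw : 0 < pt μ (fun ω => (U ω, W ω)) ω := pt_pos hμ0 _ hω
  have hw : 0 < pt μ W ω := pt_pos hμ0 _ hω
  have key : pt μ (fun ω => (X ω, Y ω, U ω, W ω)) ω * pt μ W ω /
        (pt μ (fun ω => (X ω, Y ω, W ω)) ω * pt μ (fun ω => (U ω, W ω)) ω)
      = (pt μ (fun ω => (X ω, U ω, W ω)) ω * pt μ W ω /
          (pt μ (fun ω => (X ω, W ω)) ω * pt μ (fun ω => (U ω, W ω)) ω)) *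
        (pt μ (fun ω => (X ω, Y ω, U ω, W ω)) ω * pt μ (fun ω => (X ω, W ω)) ω /
          (pt μ (fun ω => (X ω, Y ω, W ω)) ω * pt μ (fun ω => (X ω, U ω, W ω)) ω)) := by
    field_simp
  rw [key, Real.log_mul (ne_of_gt (by positivity)) (ne_of_gt (by positivity))]

lemma cmi_chain2 {μ : Ω → ℝ} (hμ0 : ∀ ω, 0 ≤ μ ω) (X : Ω → α) (Y : Ω → β) (V : Ω → γ)
    (W : Ω → δ) :
    cmi μ X (fun ω => (Y ω, V ω)) W = cmi μ X Y W + cmi μ X V (fun ω => (Y ω, W ω)) := by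
  rw [cmi_comm μ X _ W, cmi_chain1 hμ0 Y V X W, cmi_comm μ Y X W,
    cmi_comm μ V X (fun ω => (Y ω, W ω))]

lemma cmi_detzero {μ : Ω → ℝ} (hμ0 : ∀ ω, 0 ≤ μ ω) {V : Ω → α} {W : Ω → γ} (Y : Ω → β)
    {g : γ → α} (hV : ∀ ω, V ω = g (W ω)) : cmi μ V Y W = 0 := by
  rw [cmi_eq]
  have e1 : pt μ (fun ω => (V ω, Y ω, W ω)) = pt μ (fun ω => (Y ω, W ω)) :=
    pt_congr μ (fun ω₁ ω₂ => by
      simp only [Prod.mk.injEq, hV]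
      constructor
      · exact fun h => ⟨h.2.1, h.2.2⟩
      · exact fun h => ⟨congrArg g h.2, h.1, h.2⟩)
  have e2 : pt μ (fun ω => (V ω, W ω)) = pt μ W :=
    pt_congr μ (fun ω₁ ω₂ => by
      simp only [Prod.mk.injEq, hV]
      constructor
      · exact fun h => h.2
      · exact fun h => ⟨congrArg g h, h⟩)
  rw [e1, e2]
  rw [show (0:ℝ) = ∑ ω : Ω, μ ω * 0 by simp]
  refine wsum_congr fun ω hω => ?_
  have h1 : 0 < pt μ (fun ω => (Y ω, W ω)) ω := pt_pos hμ0 _ hω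
  have h2 : 0 < pt μ W ω := pt_pos hμ0 _ hω
  rw [mul_comm (pt μ (fun ω => (Y ω, W ω)) ω), div_self (by positivity), Real.log_one]



lemma marg_fst (μ : Ω → ℝ) (X : Ω → α) (W : Ω → γ) (c : γ) :
    ∑ a, pmfOf μ (fun ω => (X ω, W ω)) (a, c) = pmfOf μ W c := by
  have h := pmf_comp μ (fun ω => (X ω, W ω)) (fun p => p.2) c
  rw [Finset.sum_filter, Fintype.sum_prod_type] at h
  simpa using h.symm

lemma log_term_ge {p q : ℝ} (hp : 0 ≤ p) (hq : 0 ≤ q) (h : p ≠ 0 → 0 < q) :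
    p - q ≤ p * Real.log (p / q) := by
  rcases eq_or_lt_of_le hp with h0 | hp0
  · rw [← h0]; simpa using hq
  · have hq0 : 0 < q := h (ne_of_gt hp0)
    have h1 : Real.log (q / p) ≤ q / p - 1 := Real.log_le_sub_one_of_pos (by positivity)
    have h2 : Real.log (q / p) = Real.log q - Real.log p :=
      Real.log_div (ne_of_gt hq0) (ne_of_gt hp0)
    have h3 : Real.log (p / q) = Real.log p - Real.log q :=
      Real.log_div (ne_of_gt hp0) (ne_of_gt hq0)
    have h5 := mul_le_mul_of_nonneg_left h1 hp
    have h4 : p * (q / p - 1) = q - p := by field_simp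
    rw [h2, h4] at h5
    rw [h3]
    nlinarith

lemma log_term_eq {p q : ℝ} (hp : 0 ≤ p) (hq : 0 ≤ q) (h : p ≠ 0 → 0 < q)
    (he : p * Real.log (p / q) = p - q) : p = q := by
  rcases eq_or_lt_of_le hp with h0 | hp0
  · rw [← h0] at he ⊢
    rw [zero_mul] at he
    linarith
  · have hq0 : 0 < q := h (ne_of_gt hp0)
    by_contra hne
    have hqp : q / p ≠ 1 := by
      intro hh
      have hp' : p ≠ 0 := ne_of_gt hp0
      field_simp [hp'] at hh
      exact hne hh.symm
    have h1 : Real.log (q / p) < q / p - 1 := Real.log_lt_sub_one_of_pos (by positivity) hqp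
    have h2 : Real.log (q / p) = Real.log q - Real.log p :=
      Real.log_div (ne_of_gt hq0) (ne_of_gt hp0)
    have h3 : Real.log (p / q) = Real.log p - Real.log q :=
      Real.log_div (ne_of_gt hp0) (ne_of_gt hq0)
    have h5 := mul_lt_mul_of_pos_left h1 hp0
    have h4 : p * (q / p - 1) = q - p := by field_simp
    rw [h2, h4] at h5
    rw [h3] at he
    nlinarith

lemma cmi_nonneg_and {μ : Ω → ℝ} (hμ : IsPMF μ) (X : Ω → α) (Y : Ω → β) (W : Ω → γ) :
    0 ≤ cmi μ X Y W ∧ (cmi μ X Y W = 0 → ∀ a b c,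
      pmfOf μ (fun ω => (X ω, Y ω, W ω)) (a, b, c) * pmfOf μ W c =
      pmfOf μ (fun ω => (X ω, W ω)) (a, c) * pmfOf μ (fun ω => (Y ω, W ω)) (b, c)) := by
  obtain ⟨hμ0, hμ1⟩ := hμ
  set T : α × β × γ → ℝ := fun q =>
    pmfOf μ (fun ω => (X ω, Y ω, W ω)) q *
      Real.log (pmfOf μ (fun ω => (X ω, Y ω, W ω)) q * pmfOf μ W q.2.2 /
        (pmfOf μ (fun ω => (X ω, W ω)) (q.1, q.2.2) *
          pmfOf μ (fun ω => (Y ω, W ω)) (q.2.1, q.2.2))) with hT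
  set D : α × β × γ → ℝ := fun q =>
    pmfOf μ (fun ω => (X ω, Y ω, W ω)) q -
      pmfOf μ (fun ω => (X ω, W ω)) (q.1, q.2.2) *
        pmfOf μ (fun ω => (Y ω, W ω)) (q.2.1, q.2.2) / pmfOf μ W q.2.2 with hD
  have flat : cmi μ X Y W = ∑ q : α × β × γ, T q := by
    rw [cmi, hT]
    simp only [Fintype.sum_prod_type]
  -- domination facts
  have dom3W : ∀ q : α × β × γ, pmfOf μ (fun ω => (X ω, Y ω, W ω)) q ≤ pmfOf μ W q.2.2 :=
    fun q => pmf_le hμ0 (fun ω h => congrArg (fun r => r.2.2) h)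
  have dom3XW : ∀ q : α × β × γ,
      pmfOf μ (fun ω => (X ω, Y ω, W ω)) q ≤ pmfOf μ (fun ω => (X ω, W ω)) (q.1, q.2.2) :=
    fun q => pmf_le hμ0 (fun ω h => by
      rw [Prod.ext_iff, Prod.ext_iff] at h
      exact Prod.ext h.1 h.2.2)
  have dom3YW : ∀ q : α × β × γ,
      pmfOf μ (fun ω => (X ω, Y ω, W ω)) q ≤ pmfOf μ (fun ω => (Y ω, W ω)) (q.2.1, q.2.2) :=
    fun q => pmf_le hμ0 (fun ω h => by
      rw [Prod.ext_iff, Prod.ext_iff] at h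
      exact Prod.ext h.2.1 h.2.2)
  have domXWW : ∀ a c, pmfOf μ (fun ω => (X ω, W ω)) (a, c) ≤ pmfOf μ W c :=
    fun a c => pmf_le hμ0 (fun ω h => congrArg (fun r => r.2) h)
  -- the per-term inequality
  have key : ∀ q : α × β × γ, D q ≤ T q := by
    intro q
    by_cases hc : pmfOf μ W q.2.2 = 0
    · have h3 : pmfOf μ (fun ω => (X ω, Y ω, W ω)) q = 0 :=
        le_antisymm (hc ▸ dom3W q) (pmf_nonneg hμ0 _ _)
      have hxw : pmfOf μ (fun ω => (X ω, W ω)) (q.1, q.2.2) = 0 :=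
        le_antisymm (hc ▸ domXWW q.1 q.2.2) (pmf_nonneg hμ0 _ _)
      simp [hT, hD, h3, hxw, hc]
    · have hcpos : 0 < pmfOf μ W q.2.2 :=
        lt_of_le_of_ne (pmf_nonneg hμ0 _ _) (Ne.symm hc)
      have harg : pmfOf μ (fun ω => (X ω, Y ω, W ω)) q * pmfOf μ W q.2.2 /
            (pmfOf μ (fun ω => (X ω, W ω)) (q.1, q.2.2) *
              pmfOf μ (fun ω => (Y ω, W ω)) (q.2.1, q.2.2))
          = pmfOf μ (fun ω => (X ω, Y ω, W ω)) q /
            (pmfOf μ (fun ω => (X ω, W ω)) (q.1, q.2.2) *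
              pmfOf μ (fun ω => (Y ω, W ω)) (q.2.1, q.2.2) / pmfOf μ W q.2.2) := by
        rw [div_div_eq_mul_div]
      rw [hT, hD]
      simp only []
      rw [harg]
      have hn1 := pmf_nonneg hμ0 (fun ω => (X ω, W ω)) (q.1, q.2.2)
      have hn2 := pmf_nonneg hμ0 (fun ω => (Y ω, W ω)) (q.2.1, q.2.2)
      refine log_term_ge (pmf_nonneg hμ0 _ _) (by positivity) (fun hne => ?_)
      have hpos3 : 0 < pmfOf μ (fun ω => (X ω, Y ω, W ω)) q :=
        lt_of_le_of_ne (pmf_nonneg hμ0 _ _) (Ne.symm hne)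
      have h1 : 0 < pmfOf μ (fun ω => (X ω, W ω)) (q.1, q.2.2) :=
        lt_of_lt_of_le hpos3 (dom3XW q)
      have h2 : 0 < pmfOf μ (fun ω => (Y ω, W ω)) (q.2.1, q.2.2) :=
        lt_of_lt_of_le hpos3 (dom3YW q)
      positivity
  -- sums
  have hsum1 : ∑ q : α × β × γ, pmfOf μ (fun ω => (X ω, Y ω, W ω)) q = 1 := by
    rw [sum_pmf μ _, hμ1]
  have hmargc : ∀ c : γ, ∑ a, ∑ b, pmfOf μ (fun ω => (X ω, W ω)) (a, c) *
      pmfOf μ (fun ω => (Y ω, W ω)) (b, c) / pmfOf μ W c = pmfOf μ W c := by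
    intro c
    have e1 : ∑ a, ∑ b, pmfOf μ (fun ω => (X ω, W ω)) (a, c) *
        pmfOf μ (fun ω => (Y ω, W ω)) (b, c) / pmfOf μ W c
        = ((∑ a, pmfOf μ (fun ω => (X ω, W ω)) (a, c)) *
            (∑ b, pmfOf μ (fun ω => (Y ω, W ω)) (b, c))) / pmfOf μ W c := by
      rw [Finset.sum_mul_sum, Finset.sum_div]
      exact Finset.sum_congr rfl fun a _ => (Finset.sum_div _ _ _).symm
    rw [e1, marg_fst μ X W c, marg_fst μ Y W c]
    by_cases hc : pmfOf μ W c = 0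
    · rw [hc]; simp
    · rw [mul_div_assoc, div_self hc, mul_one]
  have hsum2 : ∑ q : α × β × γ, (pmfOf μ (fun ω => (X ω, W ω)) (q.1, q.2.2) *
      pmfOf μ (fun ω => (Y ω, W ω)) (q.2.1, q.2.2) / pmfOf μ W q.2.2) = 1 := by
    rw [Fintype.sum_prod_type]
    have swap : ∀ a : α, (∑ p : β × γ, pmfOf μ (fun ω => (X ω, W ω)) (a, p.2) *
        pmfOf μ (fun ω => (Y ω, W ω)) (p.1, p.2) / pmfOf μ W p.2)
        = ∑ c : γ, ∑ b : β, pmfOf μ (fun ω => (X ω, W ω)) (a, c) *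
          pmfOf μ (fun ω => (Y ω, W ω)) (b, c) / pmfOf μ W c := by
      intro a
      rw [Fintype.sum_prod_type, Finset.sum_comm]
    simp only [swap]
    rw [Finset.sum_comm]
    rw [Finset.sum_congr rfl (fun c _ => hmargc c), sum_pmf μ W, hμ1]
  have hDsum : ∑ q : α × β × γ, D q = 0 := by
    simp only [hD]
    rw [Finset.sum_sub_distrib, hsum1, hsum2, sub_self]
  constructor
  · have hge := Finset.sum_le_sum (fun q (_ : q ∈ (univ : Finset (α × β × γ))) => key q)
    rw [flat]
    linarith
  · intro hcmi a b c
    have hTsum : ∑ q : α × β × γ, T q = 0 := by rw [← flat, hcmi]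
    have hz : ∀ q ∈ (univ : Finset (α × β × γ)), T q - D q = 0 := by
      refine (Finset.sum_eq_zero_iff_of_nonneg
        (fun q _ => sub_nonneg.2 (key q))).1 ?_
      rw [Finset.sum_sub_distrib, hTsum, hDsum, sub_self]
    have hq0 := hz (a, b, c) (Finset.mem_univ _)
    by_cases hc : pmfOf μ W c = 0
    · have h3 : pmfOf μ (fun ω => (X ω, Y ω, W ω)) (a, b, c) = 0 :=
        le_antisymm (hc ▸ dom3W (a, b, c)) (pmf_nonneg hμ0 _ _)
      have hxw : pmfOf μ (fun ω => (X ω, W ω)) (a, c) = 0 :=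
        le_antisymm (hc ▸ domXWW a c) (pmf_nonneg hμ0 _ _)
      rw [h3, hxw, hc]
      ring
    · have he : T (a, b, c) = D (a, b, c) := by
        have := hq0
        linarith
      simp only [hT, hD] at he
      rw [← div_div_eq_mul_div] at he
      have hpq := log_term_eq (p := pmfOf μ (fun ω => (X ω, Y ω, W ω)) (a, b, c))
        (pmf_nonneg hμ0 _ _) (by
          have := pmf_nonneg hμ0 (fun ω => (X ω, W ω)) (a, c)
          have := pmf_nonneg hμ0 (fun ω => (Y ω, W ω)) (b, c)
          have hcpos : 0 < pmfOf μ W c :=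
            lt_of_le_of_ne (pmf_nonneg hμ0 _ _) (Ne.symm hc)
          positivity)
        (fun hne => by
          have hpos3 : 0 < pmfOf μ (fun ω => (X ω, Y ω, W ω)) (a, b, c) :=
            lt_of_le_of_ne (pmf_nonneg hμ0 _ _) (Ne.symm hne)
          have h1 : 0 < pmfOf μ (fun ω => (X ω, W ω)) (a, c) :=
            lt_of_lt_of_le hpos3 (dom3XW (a, b, c))
          have h2 : 0 < pmfOf μ (fun ω => (Y ω, W ω)) (b, c) :=
            lt_of_lt_of_le hpos3 (dom3YW (a, b, c))
          have hcpos : 0 < pmfOf μ W c :=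
            lt_of_le_of_ne (pmf_nonneg hμ0 _ _) (Ne.symm hc)
          positivity) he
      rw [eq_div_iff hc] at hpq
      exact hpq

lemma cmi_nonneg {μ : Ω → ℝ} (hμ : IsPMF μ) (X : Ω → α) (Y : Ω → β) (W : Ω → γ) :
    0 ≤ cmi μ X Y W := (cmi_nonneg_and hμ X Y W).1

lemma cmi_factor {μ : Ω → ℝ} (hμ : IsPMF μ) {X : Ω → α} {Y : Ω → β} {W : Ω → γ}
    (h : cmi μ X Y W = 0) : ∀ a b c,
      pmfOf μ (fun ω => (X ω, Y ω, W ω)) (a, b, c) * pmfOf μ W c =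
      pmfOf μ (fun ω => (X ω, W ω)) (a, c) * pmfOf μ (fun ω => (Y ω, W ω)) (b, c) :=
  (cmi_nonneg_and hμ X Y W).2 h

lemma cmi_of_factor {μ : Ω → ℝ} (hμ0 : ∀ ω, 0 ≤ μ ω) {X : Ω → α} {Y : Ω → β} {W : Ω → γ}
    (h : ∀ a b c, pmfOf μ (fun ω => (X ω, Y ω, W ω)) (a, b, c) * pmfOf μ W c =
      pmfOf μ (fun ω => (X ω, W ω)) (a, c) * pmfOf μ (fun ω => (Y ω, W ω)) (b, c)) :
    cmi μ X Y W = 0 := by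
  rw [cmi_eq]
  rw [show (0:ℝ) = ∑ ω : Ω, μ ω * 0 by simp]
  refine wsum_congr fun ω hω => ?_
  have h1 : 0 < pt μ (fun ω => (X ω, W ω)) ω := pt_pos hμ0 _ hω
  have h2 : 0 < pt μ (fun ω => (Y ω, W ω)) ω := pt_pos hμ0 _ hω
  have harg : pt μ (fun ω => (X ω, Y ω, W ω)) ω * pt μ W ω /
      (pt μ (fun ω => (X ω, W ω)) ω * pt μ (fun ω => (Y ω, W ω)) ω) = 1 := by
    rw [div_eq_one_iff_eq (by positivity)]
    exact h (X ω) (Y ω) (W ω)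
  rw [harg, Real.log_one]

lemma cmi_dpi {μ : Ω → ℝ} (hμ : IsPMF μ) {V : Ω → α} {U : Ω → γ} {W : Ω → δ} (Y : Ω → β)
    {g : γ → δ → α} (hV : ∀ ω, V ω = g (U ω) (W ω)) : cmi μ V Y W ≤ cmi μ U Y W := by
  have h1 := cmi_chain1 hμ.1 U V Y W
  have h2 : cmi μ V Y (fun ω => (U ω, W ω)) = 0 :=
    cmi_detzero hμ.1 Y (g := fun p => g p.1 p.2) hV
  have h3 := cmi_chain1 hμ.1 V U Y W
  have h4 : cmi μ (fun ω => (U ω, V ω)) Y W = cmi μ (fun ω => (V ω, U ω)) Y W :=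
    cmi_congr μ (fun ω₁ ω₂ => by simp only [Prod.mk.injEq]; tauto)
  have h5 : 0 ≤ cmi μ U Y (fun ω => (V ω, W ω)) := cmi_nonneg hμ _ _ _
  linarith

lemma cmi_dpi2 {μ : Ω → ℝ} (hμ : IsPMF μ) {V : Ω → α} {U : Ω → γ} {W : Ω → δ} (Y : Ω → β)
    {g : γ → δ → α} (hV : ∀ ω, V ω = g (U ω) (W ω)) : cmi μ Y V W ≤ cmi μ Y U W := by
  rw [cmi_comm μ Y V W, cmi_comm μ Y U W]
  exact cmi_dpi hμ Y hV

lemma mi_eq_cmi_unit {μ : Ω → ℝ} (hμ : IsPMF μ) (X : Ω → α) (Y : Ω → β) :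
    mi μ X Y = cmi μ X Y (fun _ => (0 : Fin 1)) := by
  rw [mi_eq, cmi_eq]
  refine Finset.sum_congr rfl fun ω _ => ?_
  have e1 : pt μ (fun ω => (X ω, Y ω, (0 : Fin 1))) = pt μ (fun ω => (X ω, Y ω)) :=
    pt_congr μ (fun ω₁ ω₂ => by simp [Prod.mk.injEq])
  have e2 : pt μ (fun ω => (X ω, (0 : Fin 1))) = pt μ X :=
    pt_congr μ (fun ω₁ ω₂ => by simp [Prod.mk.injEq])
  have e3 : pt μ (fun ω => (Y ω, (0 : Fin 1))) = pt μ Y :=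
    pt_congr μ (fun ω₁ ω₂ => by simp [Prod.mk.injEq])
  have e4 : pt μ (fun _ : Ω => (0 : Fin 1)) ω = 1 := by
    rw [pt, pmfOf]
    rw [show (univ.filter fun ω' : Ω => (0 : Fin 1) = (0 : Fin 1)) = univ by simp]
    exact hμ.2
  rw [e1, e2, e3, e4, mul_one]

lemma mi_comm (μ : Ω → ℝ) (X : Ω → α) (Y : Ω → β) : mi μ X Y = mi μ Y X := by
  rw [mi_eq, mi_eq]
  refine Finset.sum_congr rfl fun ω _ => ?_
  refine congrArg _ (congrArg Real.log ?_)
  rw [pt_congr μ (show FibEq (fun ω => (X ω, Y ω)) (fun ω => (Y ω, X ω)) from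
    fun ω₁ ω₂ => by simp only [Prod.mk.injEq]; tauto)]
  ring

lemma mi_nonneg {μ : Ω → ℝ} (hμ : IsPMF μ) (X : Ω → α) (Y : Ω → β) : 0 ≤ mi μ X Y := by
  rw [mi_eq_cmi_unit hμ]
  exact cmi_nonneg hμ _ _ _

lemma mi_chain {μ : Ω → ℝ} (hμ : IsPMF μ) (X : Ω → α) (Y : Ω → β) (V : Ω → γ) :
    mi μ X (fun ω => (Y ω, V ω)) = mi μ X Y + cmi μ X V Y := by
  rw [mi_eq_cmi_unit hμ, mi_eq_cmi_unit hμ]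
  rw [cmi_chain2 hμ.1 X Y V (fun _ => (0 : Fin 1))]
  congr 1
  rw [cmi_comm]
  rw [cmi_congr3 μ (show FibEq (fun ω => (Y ω, (0 : Fin 1))) Y from
    fun ω₁ ω₂ => by simp [Prod.mk.injEq])]
  rw [cmi_comm]

lemma mi_dpi {μ : Ω → ℝ} (hμ : IsPMF μ) {V : Ω → α} {U : Ω → γ} (Y : Ω → β)
    {g : γ → α} (hV : ∀ ω, V ω = g (U ω)) : mi μ V Y ≤ mi μ U Y := by
  rw [mi_eq_cmi_unit hμ, mi_eq_cmi_unit hμ]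
  exact cmi_dpi hμ (g := fun u _ => g u) Y hV

lemma mi_dpi2 {μ : Ω → ℝ} (hμ : IsPMF μ) {V : Ω → α} {U : Ω → γ} (Y : Ω → β)
    {g : γ → α} (hV : ∀ ω, V ω = g (U ω)) : mi μ Y V ≤ mi μ Y U := by
  rw [mi_comm μ Y V, mi_comm μ Y U]
  exact mi_dpi hμ Y hV

lemma mi_of_factor {μ : Ω → ℝ} (hμ0 : ∀ ω, 0 ≤ μ ω) {X : Ω → α} {Y : Ω → β}
    (h : ∀ a b, pmfOf μ (fun ω => (X ω, Y ω)) (a, b) = pmfOf μ X a * pmfOf μ Y b) :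
    mi μ X Y = 0 := by
  rw [mi_eq]
  rw [show (0:ℝ) = ∑ ω : Ω, μ ω * 0 by simp]
  refine wsum_congr fun ω hω => ?_
  have h1 : 0 < pt μ X ω := pt_pos hμ0 _ hω
  have h2 : 0 < pt μ Y ω := pt_pos hμ0 _ hω
  have harg : pt μ (fun ω => (X ω, Y ω)) ω / (pt μ X ω * pt μ Y ω) = 1 := by
    rw [div_eq_one_iff_eq (by positivity)]
    exact h (X ω) (Y ω)
  rw [harg, Real.log_one]

lemma pmf_comp' [Fintype γ] [DecidableEq γ] [DecidableEq δ] (μ : Ω → ℝ) (F : Ω → γ) (g : γ → δ)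
    (b : δ) :
    pmfOf μ (fun ω => g (F ω)) b = ∑ y, if g y = b then pmfOf μ F y else 0 := by
  rw [pmf_comp μ F g b, Finset.sum_filter]

lemma sum_sum_ite_mul {ι κ : Type} [Fintype ι] [Fintype κ] (P : ι → Prop) (Q : κ → Prop)
    [DecidablePred P] [DecidablePred Q] (A : ι → ℝ) (B : κ → ℝ) :
    ∑ e : ι, ∑ v : κ, (if P e ∧ Q v then A e * B v else 0)
      = (∑ e, if P e then A e else 0) * (∑ v, if Q v then B v else 0) := by
  rw [Finset.sum_mul_sum]
  refine Finset.sum_congr rfl fun e _ => Finset.sum_congr rfl fun v _ => ?_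
  by_cases hp : P e <;> by_cases hq : Q v <;> simp [hp, hq]

lemma sum_ite_one_coord {n : ℕ} {E : Type} [Fintype E] [DecidableEq E] (p : Fin n → E → ℝ)
    (hp : ∀ i, ∑ y, p i y = 1) (k : Fin n) (a : E) :
    ∑ e : Fin n → E, (if e k = a then ∏ i, p i (e i) else 0) = p k a := by
  have hrw : ∀ e : Fin n → E, (if e k = a then ∏ i, p i (e i) else 0)
      = ∏ i, (if i = k then (if e i = a then p i (e i) else 0) else p i (e i)) := by
    intro e
    by_cases h1 : e k = a
    · rw [if_pos h1]
      refine Eq.symm (Finset.prod_congr rfl fun i _ => ?_)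
      by_cases hi : i = k
      · subst hi; rw [if_pos rfl, if_pos h1]
      · rw [if_neg hi]
    · rw [if_neg h1]
      refine Eq.symm (Finset.prod_eq_zero (Finset.mem_univ k) ?_)
      rw [if_pos rfl, if_neg h1]
  simp only [hrw]
  have hps := Finset.prod_univ_sum (fun _ : Fin n => (univ : Finset E))
    (fun i y => if i = k then (if y = a then p i y else 0) else p i y)
  rw [← Fintype.piFinset_univ, ← hps]
  have hcol : ∀ i : Fin n, (∑ y, (if i = k then (if y = a then p i y else 0) else p i y))
      = (if i = k then p i a else 1) := by
    intro i
    by_cases hi : i = k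
    · simp [hi, Finset.sum_ite_eq']
    · simp [hi, hp i]
  simp only [hcol]
  have hout : ∀ i ∈ (univ : Finset (Fin n)), i ∉ ({k} : Finset (Fin n)) →
      (if i = k then p i a else 1) = 1 := by
    intro i _ hi
    rw [if_neg (by simpa using hi)]
  rw [← Finset.prod_subset (Finset.subset_univ ({k} : Finset (Fin n))) hout,
    Finset.prod_singleton, if_pos rfl]

lemma sum_ite_two_coord {n : ℕ} {E : Type} [Fintype E] [DecidableEq E] (p : Fin n → E → ℝ)
    (hp : ∀ i, ∑ y, p i y = 1) (k₁ k₂ : Fin n) (hk : k₁ ≠ k₂) (a b : E) :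
    ∑ e : Fin n → E, (if e k₁ = a ∧ e k₂ = b then ∏ i, p i (e i) else 0)
      = p k₁ a * p k₂ b := by
  have hrw : ∀ e : Fin n → E, (if e k₁ = a ∧ e k₂ = b then ∏ i, p i (e i) else 0)
      = ∏ i, (if i = k₁ then (if e i = a then p i (e i) else 0)
          else if i = k₂ then (if e i = b then p i (e i) else 0) else p i (e i)) := by
    intro e
    by_cases h1 : e k₁ = a
    · by_cases h2 : e k₂ = b
      · rw [if_pos ⟨h1, h2⟩]
        refine Eq.symm (Finset.prod_congr rfl fun i _ => ?_)
        by_cases hi : i = k₁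
        · subst hi; rw [if_pos rfl, if_pos h1]
        · rw [if_neg hi]
          by_cases hj : i = k₂
          · subst hj; rw [if_pos rfl, if_pos h2]
          · rw [if_neg hj]
      · rw [if_neg (fun hh => h2 hh.2)]
        refine Eq.symm (Finset.prod_eq_zero (Finset.mem_univ k₂) ?_)
        rw [if_neg (Ne.symm hk), if_pos rfl, if_neg h2]
    · rw [if_neg (fun hh => h1 hh.1)]
      refine Eq.symm (Finset.prod_eq_zero (Finset.mem_univ k₁) ?_)
      rw [if_pos rfl, if_neg h1]
  simp only [hrw]
  have hps := Finset.prod_univ_sum (fun _ : Fin n => (univ : Finset E))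
    (fun i y => if i = k₁ then (if y = a then p i y else 0)
      else if i = k₂ then (if y = b then p i y else 0) else p i y)
  rw [← Fintype.piFinset_univ, ← hps]
  have hcol : ∀ i : Fin n, (∑ y, (if i = k₁ then (if y = a then p i y else 0)
      else if i = k₂ then (if y = b then p i y else 0) else p i y))
      = (if i = k₁ then p i a else if i = k₂ then p i b else 1) := by
    intro i
    by_cases hi : i = k₁
    · simp [hi, Finset.sum_ite_eq']
    · by_cases hj : i = k₂
      · simp [hi, hj, Finset.sum_ite_eq']
      · simp [hi, hj, hp i]
  simp only [hcol]
  have hout : ∀ i ∈ (univ : Finset (Fin n)), i ∉ ({k₁, k₂} : Finset (Fin n)) →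
      (if i = k₁ then p i a else if i = k₂ then p i b else 1) = 1 := by
    intro i _ hi
    simp only [Finset.mem_insert, Finset.mem_singleton, not_or] at hi
    rw [if_neg hi.1, if_neg hi.2]
  rw [← Finset.prod_subset (Finset.subset_univ ({k₁, k₂} : Finset (Fin n))) hout,
    Finset.prod_insert (by simpa using hk), Finset.prod_singleton,
    if_pos rfl, if_neg (Ne.symm hk), if_pos rfl]

lemma eps1_fact {Ω A E δ : Type} [Fintype Ω] [Fintype A] [DecidableEq A] [Fintype E]
    [DecidableEq E] [Fintype δ] [DecidableEq δ] {μ : Ω → ℝ} (hμ : IsPMF μ) (x : ℕ → Ω → A) (ε : ℕ → Ω → E)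
    (t N : ℕ)
    (hNoise : ∀ (e : Fin (N + 1) → E) (v : Fin (N + 1) → A),
      pmfOf μ (fun ω => ((fun i : Fin (N + 1) => ε (t + (i : ℕ)) ω),
          (fun i : Fin (N + 1) => x (t + (i : ℕ)) ω))) (e, v)
        = (∏ i : Fin (N + 1), pmfOf μ (ε (t + (i : ℕ))) (e i))
          * pmfOf μ (fun ω => fun i : Fin (N + 1) => x (t + (i : ℕ)) ω) v)
    (k : Fin (N + 1)) (g : (Fin (N + 1) → A) → δ) (a : E) (c : δ) :
    pmfOf μ (fun ω => (ε (t + (k : ℕ)) ω, g (fun i : Fin (N + 1) => x (t + (i : ℕ)) ω))) (a, c)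
      = pmfOf μ (ε (t + (k : ℕ))) a *
        pmfOf μ (fun ω => g (fun i : Fin (N + 1) => x (t + (i : ℕ)) ω)) c := by
  have hc := pmf_comp μ
    (fun ω => ((fun i : Fin (N + 1) => ε (t + (i : ℕ)) ω),
      (fun i : Fin (N + 1) => x (t + (i : ℕ)) ω)))
    (fun p => (p.1 k, g p.2)) (a, c)
  refine hc.trans ?_
  rw [Finset.sum_filter, Fintype.sum_prod_type]
  simp only [hNoise, Prod.mk.injEq]
  rw [sum_sum_ite_mul (fun e : Fin (N + 1) → E => e k = a)
    (fun v : Fin (N + 1) → A => g v = c)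
    (fun e => ∏ i : Fin (N + 1), pmfOf μ (ε (t + (i : ℕ))) (e i))
    (fun v => pmfOf μ (fun ω => fun i : Fin (N + 1) => x (t + (i : ℕ)) ω) v)]
  rw [sum_ite_one_coord (fun i y => pmfOf μ (ε (t + (i : ℕ))) y)
    (fun i => by rw [sum_pmf μ (ε (t + (i : ℕ))), hμ.2]) k a]
  rw [← pmf_comp' μ (fun ω => fun i : Fin (N + 1) => x (t + (i : ℕ)) ω) g c]

lemma eps2_fact {Ω A E δ : Type} [Fintype Ω] [Fintype A] [DecidableEq A] [Fintype E]
    [DecidableEq E] [Fintype δ] [DecidableEq δ] {μ : Ω → ℝ} (hμ : IsPMF μ) (x : ℕ → Ω → A) (ε : ℕ → Ω → E)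
    (t N : ℕ)
    (hNoise : ∀ (e : Fin (N + 1) → E) (v : Fin (N + 1) → A),
      pmfOf μ (fun ω => ((fun i : Fin (N + 1) => ε (t + (i : ℕ)) ω),
          (fun i : Fin (N + 1) => x (t + (i : ℕ)) ω))) (e, v)
        = (∏ i : Fin (N + 1), pmfOf μ (ε (t + (i : ℕ))) (e i))
          * pmfOf μ (fun ω => fun i : Fin (N + 1) => x (t + (i : ℕ)) ω) v)
    (k₁ k₂ : Fin (N + 1)) (hk : k₁ ≠ k₂) (g : (Fin (N + 1) → A) → δ) (a b : E) (c : δ) :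
    pmfOf μ (fun ω => ((ε (t + (k₁ : ℕ)) ω, ε (t + (k₂ : ℕ)) ω),
        g (fun i : Fin (N + 1) => x (t + (i : ℕ)) ω))) ((a, b), c)
      = pmfOf μ (ε (t + (k₁ : ℕ))) a * pmfOf μ (ε (t + (k₂ : ℕ))) b *
        pmfOf μ (fun ω => g (fun i : Fin (N + 1) => x (t + (i : ℕ)) ω)) c := by
  have hc := pmf_comp μ
    (fun ω => ((fun i : Fin (N + 1) => ε (t + (i : ℕ)) ω),
      (fun i : Fin (N + 1) => x (t + (i : ℕ)) ω)))
    (fun p => ((p.1 k₁, p.1 k₂), g p.2)) ((a, b), c)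
  refine hc.trans ?_
  rw [Finset.sum_filter, Fintype.sum_prod_type]
  simp only [hNoise, Prod.mk.injEq]
  have hsplit : ∀ (e : Fin (N + 1) → E) (v : Fin (N + 1) → A),
      (if (e k₁ = a ∧ e k₂ = b) ∧ g v = c then
        (∏ i : Fin (N + 1), pmfOf μ (ε (t + (i : ℕ))) (e i)) *
          pmfOf μ (fun ω => fun i : Fin (N + 1) => x (t + (i : ℕ)) ω) v else 0)
      = (if (e k₁ = a ∧ e k₂ = b) ∧ g v = c then
        (∏ i : Fin (N + 1), pmfOf μ (ε (t + (i : ℕ))) (e i)) *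
          pmfOf μ (fun ω => fun i : Fin (N + 1) => x (t + (i : ℕ)) ω) v else 0) := fun _ _ => rfl
  rw [sum_sum_ite_mul (fun e : Fin (N + 1) → E => e k₁ = a ∧ e k₂ = b)
    (fun v : Fin (N + 1) → A => g v = c)
    (fun e => ∏ i : Fin (N + 1), pmfOf μ (ε (t + (i : ℕ))) (e i))
    (fun v => pmfOf μ (fun ω => fun i : Fin (N + 1) => x (t + (i : ℕ)) ω) v)]
  rw [sum_ite_two_coord (fun i y => pmfOf μ (ε (t + (i : ℕ))) y)
    (fun i => by rw [sum_pmf μ (ε (t + (i : ℕ))), hμ.2]) k₁ k₂ hk a b]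
  rw [← pmf_comp' μ (fun ω => fun i : Fin (N + 1) => x (t + (i : ℕ)) ω) g c]

lemma markov_cmi {Ω A : Type} [Fintype Ω] [Fintype A] [DecidableEq A]
    {μ : Ω → ℝ} (hμ : IsPMF μ) (x : ℕ → Ω → A) (t T : ℕ)
    (hMarkov : ∀ m, t ≤ m → m < T →
      cmi μ (fun ω => fun i : Fin (m - t) => x (t + (i : ℕ)) ω) (x (m + 1)) (x m) = 0)
    {u v w : ℕ} (hu : t ≤ u) (huv : u < v) (hvw : v < w) (hw : w ≤ T) :
    cmi μ (x u) (x w) (x v) = 0 := by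
  have aux : ∀ w', v + 1 ≤ w' → w' ≤ T →
      cmi μ (fun ω => fun i : Fin (v - t) => x (t + (i : ℕ)) ω) (x w') (x v) = 0 := by
    intro w' hw1
    induction w', hw1 using Nat.le_induction with
    | base =>
      intro hle
      exact hMarkov v (by omega) (by omega)
    | succ n hn ih =>
      intro hle
      have h0 := ih (by omega)
      have s1 : cmi μ (fun ω => fun i : Fin (v - t) => x (t + (i : ℕ)) ω) (x (n + 1)) (x v)
          ≤ cmi μ (fun ω => fun i : Fin (v - t) => x (t + (i : ℕ)) ω)
            (fun ω => (x n ω, x (n + 1) ω)) (x v) :=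
        cmi_dpi2 hμ (g := fun p _ => p.2) _ (fun ω => rfl)
      have s2 := cmi_chain2 hμ.1 (fun ω => fun i : Fin (v - t) => x (t + (i : ℕ)) ω)
        (x n) (x (n + 1)) (x v)
      have s3 : cmi μ (fun ω => fun i : Fin (v - t) => x (t + (i : ℕ)) ω) (x (n + 1))
            (fun ω => (x n ω, x v ω))
          = cmi μ (fun ω => fun i : Fin (v - t) => x (t + (i : ℕ)) ω) (x (n + 1))
            (fun ω => (x v ω, x n ω)) :=
        cmi_congr3 μ (fun ω₁ ω₂ => by simp only [Prod.mk.injEq]; tauto)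
      have s4 := cmi_chain1 hμ.1 (x v) (fun ω => fun i : Fin (v - t) => x (t + (i : ℕ)) ω)
        (x (n + 1)) (x n)
      have hvt : t + (v - t) = v := by omega
      have s5 : cmi μ (fun ω => (x v ω, fun i : Fin (v - t) => x (t + (i : ℕ)) ω))
            (x (n + 1)) (x n)
          ≤ cmi μ (fun ω => fun i : Fin (n - t) => x (t + (i : ℕ)) ω) (x (n + 1)) (x n) :=
        cmi_dpi hμ (g := fun k _ => (k ⟨v - t, by omega⟩,
          fun i : Fin (v - t) => k ⟨(i : ℕ), by omega⟩)) _
          (fun ω => Prod.ext (show x v ω = x (t + (v - t)) ω by rw [hvt]) rfl)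
      have s6 : cmi μ (fun ω => fun i : Fin (n - t) => x (t + (i : ℕ)) ω) (x (n + 1)) (x n) = 0 :=
        hMarkov n (by omega) (by omega)
      have n1 : 0 ≤ cmi μ (x v) (x (n + 1)) (x n) := cmi_nonneg hμ _ _ _
      have n2 : 0 ≤ cmi μ (fun ω => fun i : Fin (v - t) => x (t + (i : ℕ)) ω) (x (n + 1)) (x v) :=
        cmi_nonneg hμ _ _ _
      linarith
  have hfin := aux w (by omega) hw
  have hut : t + (u - t) = u := by omega
  have hle : cmi μ (x u) (x w) (x v)
      ≤ cmi μ (fun ω => fun i : Fin (v - t) => x (t + (i : ℕ)) ω) (x w) (x v) :=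
    cmi_dpi hμ (g := fun h _ => h ⟨u - t, by omega⟩) _
      (fun ω => show x u ω = x (t + (u - t)) ω by rw [hut])
  have hge : 0 ≤ cmi μ (x u) (x w) (x v) := cmi_nonneg hμ _ _ _
  linarith

lemma mi_congr2 {Ω α β γ : Type} [Fintype Ω] [Fintype α] [DecidableEq α] [Fintype β]
    [DecidableEq β] [Fintype γ] [DecidableEq γ] (μ : Ω → ℝ) {X : Ω → α} {Y : Ω → β}
    {Y' : Ω → γ} (h : FibEq Y Y') : mi μ X Y = mi μ X Y' := by
  rw [mi_eq, mi_eq]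
  refine Finset.sum_congr rfl fun ω _ => ?_
  rw [pt_congr μ (fibEq_pair (fibEq_refl X) h), pt_congr μ h]

/-- **Bound on the autoinformation gap at a larger lag**: for lag times `τ' > τ > 0`, the
autoinformation gap of a representation `z_t = f(x_t, ε_t)` of a homogeneous Markov chain
at lag `τ'` is bounded by the sum of two gaps at lag `τ`:
`AIG(z_t; τ') ≤ AIG(z_t; τ) + AIG(z_{t+τ'−τ}; τ)`. -/
theorem autoinfo_gap_sum_bound {Ω A E Z : Type} [Fintype Ω]
    [Fintype A] [DecidableEq A] [Fintype E] [DecidableEq E] [Fintype Z] [DecidableEq Z]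
    (μ : Ω → ℝ) (hμ : IsPMF μ)
    (x : ℕ → Ω → A) (ε : ℕ → Ω → E) (f : A → E → Z)
    (t τ τ' : ℕ) (hτ : 0 < τ) (hττ' : τ < τ')
    -- `[x_u]_{u=t}^{t+τ'}` is a Markov chain
    (hMarkov : ∀ m, t ≤ m → m < t + τ' →
      cmi μ (fun ω => fun i : Fin (m - t) => x (t + (i : ℕ)) ω) (x (m + 1)) (x m) = 0)
    -- homogeneity of the chain
    (hHomog : ∀ m m', t ≤ m → m < t + τ' → t ≤ m' → m' < t + τ' → ∀ a b : A,
      pmfOf μ (fun ω => (x m ω, x (m + 1) ω)) (a, b) * pmfOf μ (x m') a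
        = pmfOf μ (fun ω => (x m' ω, x (m' + 1) ω)) (a, b) * pmfOf μ (x m) a)
    -- the noise variables are mutually independent and independent of the chain
    (hNoise : ∀ (e : Fin (τ' + 1) → E) (v : Fin (τ' + 1) → A),
      pmfOf μ (fun ω => ((fun i : Fin (τ' + 1) => ε (t + (i : ℕ)) ω),
          (fun i : Fin (τ' + 1) => x (t + (i : ℕ)) ω))) (e, v)
        = (∏ i : Fin (τ' + 1), pmfOf μ (ε (t + (i : ℕ))) (e i))
          * pmfOf μ (fun ω => fun i : Fin (τ' + 1) => x (t + (i : ℕ)) ω) v) :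
    mi μ (x t) (x (t + τ'))
        - mi μ (fun ω => f (x t ω) (ε t ω)) (fun ω => f (x (t + τ') ω) (ε (t + τ') ω))
      ≤ (mi μ (x t) (x (t + τ))
          - mi μ (fun ω => f (x t ω) (ε t ω)) (fun ω => f (x (t + τ) ω) (ε (t + τ) ω)))
        + (mi μ (x (t + (τ' - τ))) (x (t + (τ' - τ) + τ))
          - mi μ (fun ω => f (x (t + (τ' - τ)) ω) (ε (t + (τ' - τ)) ω))
              (fun ω => f (x (t + (τ' - τ) + τ) ω) (ε (t + (τ' - τ) + τ) ω))) := by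
  have hμ0 := hμ.1
  have hts : t + (τ' - τ) + τ = t + τ' := by omega
  rw [hts]
  -- Markov facts
  have M1 : cmi μ (x t) (x (t + τ')) (x (t + τ)) = 0 :=
    markov_cmi hμ x t (t + τ') hMarkov (le_refl t) (by omega) (by omega) (le_refl _)
  have M2 : cmi μ (x t) (x (t + τ')) (x (t + (τ' - τ))) = 0 :=
    markov_cmi hμ x t (t + τ') hMarkov (le_refl t) (by omega) (by omega) (le_refl _)
  -- noise independence facts
  have Na : mi μ (ε t) (fun ω => (x t ω, x (t + τ') ω)) = 0 := by
    refine mi_of_factor hμ0 (fun e c => ?_)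
    obtain ⟨a1, a2⟩ := c
    exact eps1_fact hμ x ε t τ' hNoise ⟨0, by omega⟩
      (fun v => (v ⟨0, by omega⟩, v ⟨τ', by omega⟩)) e (a1, a2)
  have Nb : mi μ (ε t) (fun ω => (x t ω, x (t + τ) ω)) = 0 := by
    refine mi_of_factor hμ0 (fun e c => ?_)
    obtain ⟨a1, a2⟩ := c
    exact eps1_fact hμ x ε t τ' hNoise ⟨0, by omega⟩
      (fun v => (v ⟨0, by omega⟩, v ⟨τ, by omega⟩)) e (a1, a2)
  have Ne : mi μ (ε (t + τ')) (fun ω => (x (t + τ') ω, x (t + (τ' - τ)) ω)) = 0 := by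
    refine mi_of_factor hμ0 (fun e c => ?_)
    obtain ⟨a1, a2⟩ := c
    exact eps1_fact hμ x ε t τ' hNoise ⟨τ', by omega⟩
      (fun v => (v ⟨τ', by omega⟩, v ⟨τ' - τ, by omega⟩)) e (a1, a2)
  have Nc : mi μ (ε (t + τ))
      (fun ω => (ε t ω, fun i : Fin (τ' + 1) => x (t + (i : ℕ)) ω)) = 0 := by
    refine mi_of_factor hμ0 (fun e c => ?_)
    obtain ⟨b, v⟩ := c
    have h4 : pmfOf μ (fun ω => (ε (t + τ) ω,
          (ε t ω, fun i : Fin (τ' + 1) => x (t + (i : ℕ)) ω))) (e, (b, v))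
        = pmfOf μ (fun ω => ((ε (t + τ) ω, ε t ω),
            fun i : Fin (τ' + 1) => x (t + (i : ℕ)) ω)) ((e, b), v) :=
      pmf_congr μ (fun ω => by simp only [Prod.mk.injEq]; tauto)
    have h2 : pmfOf μ (fun ω => ((ε (t + τ) ω, ε t ω),
          fun i : Fin (τ' + 1) => x (t + (i : ℕ)) ω)) ((e, b), v)
        = pmfOf μ (ε (t + τ)) e * pmfOf μ (ε t) b *
          pmfOf μ (fun ω => fun i : Fin (τ' + 1) => x (t + (i : ℕ)) ω) v :=
      eps2_fact hμ x ε t τ' hNoise ⟨τ, by omega⟩ ⟨0, by omega⟩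
        (by simp only [ne_eq, Fin.mk.injEq]; omega) (fun v => v) e b v
    have h3 : pmfOf μ (fun ω => (ε t ω, fun i : Fin (τ' + 1) => x (t + (i : ℕ)) ω)) (b, v)
        = pmfOf μ (ε t) b *
          pmfOf μ (fun ω => fun i : Fin (τ' + 1) => x (t + (i : ℕ)) ω) v :=
      eps1_fact hμ x ε t τ' hNoise ⟨0, by omega⟩ (fun v => v) b v
    rw [h4, h2, h3]
    ring
  have Nd : mi μ (ε (t + τ'))
      (fun ω => (ε t ω, fun i : Fin (τ' + 1) => x (t + (i : ℕ)) ω)) = 0 := by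
    refine mi_of_factor hμ0 (fun e c => ?_)
    obtain ⟨b, v⟩ := c
    have h4 : pmfOf μ (fun ω => (ε (t + τ') ω,
          (ε t ω, fun i : Fin (τ' + 1) => x (t + (i : ℕ)) ω))) (e, (b, v))
        = pmfOf μ (fun ω => ((ε (t + τ') ω, ε t ω),
            fun i : Fin (τ' + 1) => x (t + (i : ℕ)) ω)) ((e, b), v) :=
      pmf_congr μ (fun ω => by simp only [Prod.mk.injEq]; tauto)
    have h2 : pmfOf μ (fun ω => ((ε (t + τ') ω, ε t ω),
          fun i : Fin (τ' + 1) => x (t + (i : ℕ)) ω)) ((e, b), v)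
        = pmfOf μ (ε (t + τ')) e * pmfOf μ (ε t) b *
          pmfOf μ (fun ω => fun i : Fin (τ' + 1) => x (t + (i : ℕ)) ω) v :=
      eps2_fact hμ x ε t τ' hNoise ⟨τ', by omega⟩ ⟨0, by omega⟩
        (by simp only [ne_eq, Fin.mk.injEq]; omega) (fun v => v) e b v
    have h3 : pmfOf μ (fun ω => (ε t ω, fun i : Fin (τ' + 1) => x (t + (i : ℕ)) ω)) (b, v)
        = pmfOf μ (ε t) b *
          pmfOf μ (fun ω => fun i : Fin (τ' + 1) => x (t + (i : ℕ)) ω) v :=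
      eps1_fact hμ x ε t τ' hNoise ⟨0, by omega⟩ (fun v => v) b v
    rw [h4, h2, h3]
    ring
  have Nf : mi μ (ε (t + (τ' - τ)))
      (fun ω => (ε (t + τ') ω, fun i : Fin (τ' + 1) => x (t + (i : ℕ)) ω)) = 0 := by
    refine mi_of_factor hμ0 (fun e c => ?_)
    obtain ⟨b, v⟩ := c
    have h4 : pmfOf μ (fun ω => (ε (t + (τ' - τ)) ω,
          (ε (t + τ') ω, fun i : Fin (τ' + 1) => x (t + (i : ℕ)) ω))) (e, (b, v))
        = pmfOf μ (fun ω => ((ε (t + (τ' - τ)) ω, ε (t + τ') ω),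
            fun i : Fin (τ' + 1) => x (t + (i : ℕ)) ω)) ((e, b), v) :=
      pmf_congr μ (fun ω => by simp only [Prod.mk.injEq]; tauto)
    have h2 : pmfOf μ (fun ω => ((ε (t + (τ' - τ)) ω, ε (t + τ') ω),
          fun i : Fin (τ' + 1) => x (t + (i : ℕ)) ω)) ((e, b), v)
        = pmfOf μ (ε (t + (τ' - τ))) e * pmfOf μ (ε (t + τ')) b *
          pmfOf μ (fun ω => fun i : Fin (τ' + 1) => x (t + (i : ℕ)) ω) v :=
      eps2_fact hμ x ε t τ' hNoise ⟨τ' - τ, by omega⟩ ⟨τ', by omega⟩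
        (by simp only [ne_eq, Fin.mk.injEq]; omega) (fun v => v) e b v
    have h3 : pmfOf μ (fun ω => (ε (t + τ') ω,
          fun i : Fin (τ' + 1) => x (t + (i : ℕ)) ω)) (b, v)
        = pmfOf μ (ε (t + τ')) b *
          pmfOf μ (fun ω => fun i : Fin (τ' + 1) => x (t + (i : ℕ)) ω) v :=
      eps1_fact hμ x ε t τ' hNoise ⟨τ', by omega⟩ (fun v => v) b v
    rw [h4, h2, h3]
    ring
  -- conditional independence of representation and future given present (Z1 facts)
  have Z1B : cmi μ (fun ω => f (x t ω) (ε t ω)) (x (t + τ')) (x t) = 0 := by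
    have d1 : cmi μ (fun ω => f (x t ω) (ε t ω)) (x (t + τ')) (x t)
        ≤ cmi μ (ε t) (x (t + τ')) (x t) :=
      cmi_dpi hμ (g := fun e a => f a e) _ (fun ω => rfl)
    have d2 : mi μ (ε t) (fun ω => (x t ω, x (t + τ') ω))
        = mi μ (ε t) (x t) + cmi μ (ε t) (x (t + τ')) (x t) := mi_chain hμ _ _ _
    have d3 : 0 ≤ mi μ (ε t) (x t) := mi_nonneg hμ _ _
    have d4 : 0 ≤ cmi μ (fun ω => f (x t ω) (ε t ω)) (x (t + τ')) (x t) := cmi_nonneg hμ _ _ _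
    linarith
  have Z1A : cmi μ (fun ω => f (x t ω) (ε t ω)) (x (t + τ)) (x t) = 0 := by
    have d1 : cmi μ (fun ω => f (x t ω) (ε t ω)) (x (t + τ)) (x t)
        ≤ cmi μ (ε t) (x (t + τ)) (x t) :=
      cmi_dpi hμ (g := fun e a => f a e) _ (fun ω => rfl)
    have d2 : mi μ (ε t) (fun ω => (x t ω, x (t + τ) ω))
        = mi μ (ε t) (x t) + cmi μ (ε t) (x (t + τ)) (x t) := mi_chain hμ _ _ _
    have d3 : 0 ≤ mi μ (ε t) (x t) := mi_nonneg hμ _ _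
    have d4 : 0 ≤ cmi μ (fun ω => f (x t ω) (ε t ω)) (x (t + τ)) (x t) := cmi_nonneg hμ _ _ _
    linarith
  -- chain decompositions for the first bracket
  have eq1 : mi μ (x (t + τ')) (x t) = mi μ (x (t + τ')) (fun ω => f (x t ω) (ε t ω))
      + cmi μ (x (t + τ')) (x t) (fun ω => f (x t ω) (ε t ω)) := by
    have u1 : mi μ (x (t + τ')) (fun ω => (x t ω, f (x t ω) (ε t ω)))
        = mi μ (x (t + τ')) (x t)
          + cmi μ (x (t + τ')) (fun ω => f (x t ω) (ε t ω)) (x t) := mi_chain hμ _ _ _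
    have u2 : mi μ (x (t + τ')) (fun ω => (f (x t ω) (ε t ω), x t ω))
        = mi μ (x (t + τ')) (fun ω => f (x t ω) (ε t ω))
          + cmi μ (x (t + τ')) (x t) (fun ω => f (x t ω) (ε t ω)) := mi_chain hμ _ _ _
    have u3 : mi μ (x (t + τ')) (fun ω => (x t ω, f (x t ω) (ε t ω)))
        = mi μ (x (t + τ')) (fun ω => (f (x t ω) (ε t ω), x t ω)) :=
      mi_congr2 μ (fun ω₁ ω₂ => by simp only [Prod.mk.injEq]; tauto)
    have u4 : cmi μ (x (t + τ')) (fun ω => f (x t ω) (ε t ω)) (x t) = 0 := by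
      rw [cmi_comm]; exact Z1B
    linarith
  have eq2 : mi μ (x (t + τ)) (x t) = mi μ (x (t + τ)) (fun ω => f (x t ω) (ε t ω))
      + cmi μ (x (t + τ)) (x t) (fun ω => f (x t ω) (ε t ω)) := by
    have u1 : mi μ (x (t + τ)) (fun ω => (x t ω, f (x t ω) (ε t ω)))
        = mi μ (x (t + τ)) (x t)
          + cmi μ (x (t + τ)) (fun ω => f (x t ω) (ε t ω)) (x t) := mi_chain hμ _ _ _
    have u2 : mi μ (x (t + τ)) (fun ω => (f (x t ω) (ε t ω), x t ω))
        = mi μ (x (t + τ)) (fun ω => f (x t ω) (ε t ω))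
          + cmi μ (x (t + τ)) (x t) (fun ω => f (x t ω) (ε t ω)) := mi_chain hμ _ _ _
    have u3 : mi μ (x (t + τ)) (fun ω => (x t ω, f (x t ω) (ε t ω)))
        = mi μ (x (t + τ)) (fun ω => (f (x t ω) (ε t ω), x t ω)) :=
      mi_congr2 μ (fun ω₁ ω₂ => by simp only [Prod.mk.injEq]; tauto)
    have u4 : cmi μ (x (t + τ)) (fun ω => f (x t ω) (ε t ω)) (x t) = 0 := by
      rw [cmi_comm]; exact Z1A
    linarith
  -- Markov + noise: (ε_t, x_t) ⊥ x_{t+τ'} | x_{t+τ}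
  have hii : cmi μ (fun ω => (ε t ω, x t ω)) (x (t + τ')) (x (t + τ)) = 0 := by
    refine cmi_of_factor hμ0 (fun p b c => ?_)
    obtain ⟨e, a⟩ := p
    have hA1 : pmfOf μ (fun ω => (ε t ω, (x t ω, x (t + τ') ω, x (t + τ) ω))) (e, (a, b, c))
        = pmfOf μ (ε t) e *
          pmfOf μ (fun ω => (x t ω, x (t + τ') ω, x (t + τ) ω)) (a, b, c) :=
      eps1_fact hμ x ε t τ' hNoise ⟨0, by omega⟩
        (fun v => (v ⟨0, by omega⟩, v ⟨τ', by omega⟩, v ⟨τ, by omega⟩)) e (a, b, c)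
    have hA2 : pmfOf μ (fun ω => (ε t ω, (x t ω, x (t + τ) ω))) (e, (a, c))
        = pmfOf μ (ε t) e * pmfOf μ (fun ω => (x t ω, x (t + τ) ω)) (a, c) :=
      eps1_fact hμ x ε t τ' hNoise ⟨0, by omega⟩
        (fun v => (v ⟨0, by omega⟩, v ⟨τ, by omega⟩)) e (a, c)
    have hC1 : pmfOf μ (fun ω => ((ε t ω, x t ω), x (t + τ') ω, x (t + τ) ω)) ((e, a), b, c)
        = pmfOf μ (fun ω => (ε t ω, (x t ω, x (t + τ') ω, x (t + τ) ω))) (e, (a, b, c)) :=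
      pmf_congr μ (fun ω => by simp only [Prod.mk.injEq]; tauto)
    have hC2 : pmfOf μ (fun ω => ((ε t ω, x t ω), x (t + τ) ω)) ((e, a), c)
        = pmfOf μ (fun ω => (ε t ω, (x t ω, x (t + τ) ω))) (e, (a, c)) :=
      pmf_congr μ (fun ω => by simp only [Prod.mk.injEq]; tauto)
    have hM1f := cmi_factor hμ M1 a b c
    rw [hC1, hC2, hA1, hA2]
    linear_combination pmfOf μ (ε t) e * hM1f
  -- x_t ⊥ x_{t+τ'} | (x_{t+τ}, z_t)
  have hZ2 : cmi μ (x t) (x (t + τ'))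
      (fun ω => (x (t + τ) ω, f (x t ω) (ε t ω))) = 0 := by
    have t1 : cmi μ (fun ω => (f (x t ω) (ε t ω), x t ω)) (x (t + τ')) (x (t + τ))
        = cmi μ (fun ω => f (x t ω) (ε t ω)) (x (t + τ')) (x (t + τ))
          + cmi μ (x t) (x (t + τ'))
            (fun ω => (f (x t ω) (ε t ω), x (t + τ) ω)) := cmi_chain1 hμ0 _ _ _ _
    have t2 : cmi μ (fun ω => (f (x t ω) (ε t ω), x t ω)) (x (t + τ')) (x (t + τ))
        ≤ cmi μ (fun ω => (ε t ω, x t ω)) (x (t + τ')) (x (t + τ)) :=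
      cmi_dpi hμ (g := fun p _ => (f p.2 p.1, p.2)) _ (fun ω => rfl)
    have t4 : cmi μ (x t) (x (t + τ')) (fun ω => (x (t + τ) ω, f (x t ω) (ε t ω)))
        = cmi μ (x t) (x (t + τ')) (fun ω => (f (x t ω) (ε t ω), x (t + τ) ω)) :=
      cmi_congr3 μ (fun ω₁ ω₂ => by simp only [Prod.mk.injEq]; tauto)
    have n1 : 0 ≤ cmi μ (fun ω => f (x t ω) (ε t ω)) (x (t + τ')) (x (t + τ)) :=
      cmi_nonneg hμ _ _ _
    have n2 : 0 ≤ cmi μ (x t) (x (t + τ')) (fun ω => (f (x t ω) (ε t ω), x (t + τ) ω)) :=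
      cmi_nonneg hμ _ _ _
    linarith
  -- data processing along the chain for the lag
  have ineqA : cmi μ (x (t + τ')) (x t) (fun ω => f (x t ω) (ε t ω))
      ≤ cmi μ (x (t + τ)) (x t) (fun ω => f (x t ω) (ε t ω)) := by
    have v1 : cmi μ (x (t + τ')) (x t) (fun ω => f (x t ω) (ε t ω))
        = cmi μ (x t) (x (t + τ')) (fun ω => f (x t ω) (ε t ω)) := cmi_comm μ _ _ _
    have v2 : cmi μ (x t) (x (t + τ')) (fun ω => f (x t ω) (ε t ω))
        ≤ cmi μ (x t) (fun ω => (x (t + τ) ω, x (t + τ') ω))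
          (fun ω => f (x t ω) (ε t ω)) :=
      cmi_dpi2 hμ (g := fun p _ => p.2) _ (fun ω => rfl)
    have v3 : cmi μ (x t) (fun ω => (x (t + τ) ω, x (t + τ') ω))
          (fun ω => f (x t ω) (ε t ω))
        = cmi μ (x t) (x (t + τ)) (fun ω => f (x t ω) (ε t ω))
          + cmi μ (x t) (x (t + τ'))
            (fun ω => (x (t + τ) ω, f (x t ω) (ε t ω))) := cmi_chain2 hμ0 _ _ _ _
    have v5 : cmi μ (x t) (x (t + τ)) (fun ω => f (x t ω) (ε t ω))
        = cmi μ (x (t + τ)) (x t) (fun ω => f (x t ω) (ε t ω)) := cmi_comm μ _ _ _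
    linarith
  -- I(z_t; z_{t+τ}) ≤ I(z_t; x_{t+τ})
  have ineq2 : mi μ (fun ω => f (x t ω) (ε t ω)) (fun ω => f (x (t + τ) ω) (ε (t + τ) ω))
      ≤ mi μ (fun ω => f (x t ω) (ε t ω)) (x (t + τ)) := by
    have w1 : mi μ (fun ω => f (x t ω) (ε t ω)) (fun ω => f (x (t + τ) ω) (ε (t + τ) ω))
        ≤ mi μ (fun ω => f (x t ω) (ε t ω)) (fun ω => (x (t + τ) ω, ε (t + τ) ω)) :=
      mi_dpi2 hμ (g := fun p => f p.1 p.2) _ (fun ω => rfl)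
    have w2 : mi μ (fun ω => f (x t ω) (ε t ω)) (fun ω => (x (t + τ) ω, ε (t + τ) ω))
        = mi μ (fun ω => f (x t ω) (ε t ω)) (x (t + τ))
          + cmi μ (fun ω => f (x t ω) (ε t ω)) (ε (t + τ)) (x (t + τ)) := mi_chain hμ _ _ _
    have w3b : mi μ (ε (t + τ)) (fun ω => (x (t + τ) ω, f (x t ω) (ε t ω)))
        = mi μ (ε (t + τ)) (x (t + τ))
          + cmi μ (ε (t + τ)) (fun ω => f (x t ω) (ε t ω)) (x (t + τ)) := mi_chain hμ _ _ _
    have w3c : mi μ (ε (t + τ)) (fun ω => (x (t + τ) ω, f (x t ω) (ε t ω)))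
        ≤ mi μ (ε (t + τ)) (fun ω => (ε t ω, fun i : Fin (τ' + 1) => x (t + (i : ℕ)) ω)) :=
      mi_dpi2 hμ (g := fun p => (p.2 ⟨τ, by omega⟩, f (p.2 ⟨0, by omega⟩) p.1)) _
        (fun ω => rfl)
    have w3d : cmi μ (fun ω => f (x t ω) (ε t ω)) (ε (t + τ)) (x (t + τ))
        = cmi μ (ε (t + τ)) (fun ω => f (x t ω) (ε t ω)) (x (t + τ)) := cmi_comm μ _ _ _
    have n1 : 0 ≤ mi μ (ε (t + τ)) (x (t + τ)) := mi_nonneg hμ _ _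
    have n2 : 0 ≤ cmi μ (ε (t + τ)) (fun ω => f (x t ω) (ε t ω)) (x (t + τ)) :=
      cmi_nonneg hμ _ _ _
    linarith
  -- (iv): z_t ⊥ z_{t+τ'} | x_{t+τ'}
  have hIV : cmi μ (fun ω => f (x t ω) (ε t ω))
      (fun ω => f (x (t + τ') ω) (ε (t + τ') ω)) (x (t + τ')) = 0 := by
    have y2 : cmi μ (fun ω => f (x (t + τ') ω) (ε (t + τ') ω))
          (fun ω => f (x t ω) (ε t ω)) (x (t + τ'))
        ≤ cmi μ (ε (t + τ')) (fun ω => f (x t ω) (ε t ω)) (x (t + τ')) :=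
      cmi_dpi hμ (g := fun e a => f a e) _ (fun ω => rfl)
    have y3 : mi μ (ε (t + τ')) (fun ω => (x (t + τ') ω, f (x t ω) (ε t ω)))
        = mi μ (ε (t + τ')) (x (t + τ'))
          + cmi μ (ε (t + τ')) (fun ω => f (x t ω) (ε t ω)) (x (t + τ')) :=
      mi_chain hμ _ _ _
    have y4 : mi μ (ε (t + τ')) (fun ω => (x (t + τ') ω, f (x t ω) (ε t ω)))
        ≤ mi μ (ε (t + τ')) (fun ω => (ε t ω, fun i : Fin (τ' + 1) => x (t + (i : ℕ)) ω)) :=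
      mi_dpi2 hμ (g := fun p => (p.2 ⟨τ', by omega⟩, f (p.2 ⟨0, by omega⟩) p.1)) _
        (fun ω => rfl)
    have n1 : 0 ≤ mi μ (ε (t + τ')) (x (t + τ')) := mi_nonneg hμ _ _
    have n2 : 0 ≤ cmi μ (fun ω => f (x (t + τ') ω) (ε (t + τ') ω))
        (fun ω => f (x t ω) (ε t ω)) (x (t + τ')) := cmi_nonneg hμ _ _ _
    have y5 : cmi μ (fun ω => f (x t ω) (ε t ω))
          (fun ω => f (x (t + τ') ω) (ε (t + τ') ω)) (x (t + τ'))
        = cmi μ (fun ω => f (x (t + τ') ω) (ε (t + τ') ω))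
          (fun ω => f (x t ω) (ε t ω)) (x (t + τ')) := cmi_comm μ _ _ _
    linarith
  -- eq3 : I(z_t; x_{t+τ'}) = I(z_t; z_{t+τ'}) + I(z_t; x_{t+τ'} | z_{t+τ'})
  have eq3 : mi μ (fun ω => f (x t ω) (ε t ω)) (x (t + τ'))
      = mi μ (fun ω => f (x t ω) (ε t ω)) (fun ω => f (x (t + τ') ω) (ε (t + τ') ω))
        + cmi μ (fun ω => f (x t ω) (ε t ω)) (x (t + τ'))
          (fun ω => f (x (t + τ') ω) (ε (t + τ') ω)) := by
    have z1 : mi μ (fun ω => f (x t ω) (ε t ω))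
          (fun ω => (f (x (t + τ') ω) (ε (t + τ') ω), x (t + τ') ω))
        = mi μ (fun ω => f (x t ω) (ε t ω)) (fun ω => f (x (t + τ') ω) (ε (t + τ') ω))
          + cmi μ (fun ω => f (x t ω) (ε t ω)) (x (t + τ'))
            (fun ω => f (x (t + τ') ω) (ε (t + τ') ω)) := mi_chain hμ _ _ _
    have z2 : mi μ (fun ω => f (x t ω) (ε t ω))
          (fun ω => (x (t + τ') ω, f (x (t + τ') ω) (ε (t + τ') ω)))
        = mi μ (fun ω => f (x t ω) (ε t ω)) (x (t + τ'))
          + cmi μ (fun ω => f (x t ω) (ε t ω))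
            (fun ω => f (x (t + τ') ω) (ε (t + τ') ω)) (x (t + τ')) := mi_chain hμ _ _ _
    have z3 : mi μ (fun ω => f (x t ω) (ε t ω))
          (fun ω => (f (x (t + τ') ω) (ε (t + τ') ω), x (t + τ') ω))
        = mi μ (fun ω => f (x t ω) (ε t ω))
          (fun ω => (x (t + τ') ω, f (x (t + τ') ω) (ε (t + τ') ω))) :=
      mi_congr2 μ (fun ω₁ ω₂ => by simp only [Prod.mk.injEq]; tauto)
    linarith
  -- (iv-S) and eq4 for the shifted start
  have hIVS : cmi μ (x (t + (τ' - τ)))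
      (fun ω => f (x (t + τ') ω) (ε (t + τ') ω)) (x (t + τ')) = 0 := by
    have y2 : cmi μ (fun ω => f (x (t + τ') ω) (ε (t + τ') ω))
          (x (t + (τ' - τ))) (x (t + τ'))
        ≤ cmi μ (ε (t + τ')) (x (t + (τ' - τ))) (x (t + τ')) :=
      cmi_dpi hμ (g := fun e a => f a e) _ (fun ω => rfl)
    have y3 : mi μ (ε (t + τ')) (fun ω => (x (t + τ') ω, x (t + (τ' - τ)) ω))
        = mi μ (ε (t + τ')) (x (t + τ'))
          + cmi μ (ε (t + τ')) (x (t + (τ' - τ))) (x (t + τ')) := mi_chain hμ _ _ _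
    have n1 : 0 ≤ mi μ (ε (t + τ')) (x (t + τ')) := mi_nonneg hμ _ _
    have n2 : 0 ≤ cmi μ (fun ω => f (x (t + τ') ω) (ε (t + τ') ω))
        (x (t + (τ' - τ))) (x (t + τ')) := cmi_nonneg hμ _ _ _
    have y5 : cmi μ (x (t + (τ' - τ)))
          (fun ω => f (x (t + τ') ω) (ε (t + τ') ω)) (x (t + τ'))
        = cmi μ (fun ω => f (x (t + τ') ω) (ε (t + τ') ω))
          (x (t + (τ' - τ))) (x (t + τ')) := cmi_comm μ _ _ _
    linarith
  have eq4 : mi μ (x (t + (τ' - τ))) (x (t + τ'))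
      = mi μ (x (t + (τ' - τ))) (fun ω => f (x (t + τ') ω) (ε (t + τ') ω))
        + cmi μ (x (t + (τ' - τ))) (x (t + τ'))
          (fun ω => f (x (t + τ') ω) (ε (t + τ') ω)) := by
    have z1 : mi μ (x (t + (τ' - τ)))
          (fun ω => (f (x (t + τ') ω) (ε (t + τ') ω), x (t + τ') ω))
        = mi μ (x (t + (τ' - τ))) (fun ω => f (x (t + τ') ω) (ε (t + τ') ω))
          + cmi μ (x (t + (τ' - τ))) (x (t + τ'))
            (fun ω => f (x (t + τ') ω) (ε (t + τ') ω)) := mi_chain hμ _ _ _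
    have z2 : mi μ (x (t + (τ' - τ)))
          (fun ω => (x (t + τ') ω, f (x (t + τ') ω) (ε (t + τ') ω)))
        = mi μ (x (t + (τ' - τ))) (x (t + τ'))
          + cmi μ (x (t + (τ' - τ)))
            (fun ω => f (x (t + τ') ω) (ε (t + τ') ω)) (x (t + τ')) := mi_chain hμ _ _ _
    have z3 : mi μ (x (t + (τ' - τ)))
          (fun ω => (f (x (t + τ') ω) (ε (t + τ') ω), x (t + τ') ω))
        = mi μ (x (t + (τ' - τ)))
          (fun ω => (x (t + τ') ω, f (x (t + τ') ω) (ε (t + τ') ω))) :=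
      mi_congr2 μ (fun ω₁ ω₂ => by simp only [Prod.mk.injEq]; tauto)
    linarith
  -- grand conditional independence: (x_t, ε_t) ⊥ (x_{t+τ'}, ε_{t+τ'}) | x_s
  have hV3 : cmi μ (fun ω => (x t ω, ε t ω))
      (fun ω => (x (t + τ') ω, ε (t + τ') ω)) (x (t + (τ' - τ))) = 0 := by
    refine cmi_of_factor hμ0 (fun p q sv => ?_)
    obtain ⟨a0, e0⟩ := p
    obtain ⟨a1, e1⟩ := q
    have hG1 : pmfOf μ (fun ω => ((x t ω, ε t ω), (x (t + τ') ω, ε (t + τ') ω),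
          x (t + (τ' - τ)) ω)) ((a0, e0), (a1, e1), sv)
        = pmfOf μ (fun ω => ((ε t ω, ε (t + τ') ω),
            (x t ω, x (t + τ') ω, x (t + (τ' - τ)) ω))) ((e0, e1), (a0, a1, sv)) :=
      pmf_congr μ (fun ω => by simp only [Prod.mk.injEq]; tauto)
    have hG1b : pmfOf μ (fun ω => ((ε t ω, ε (t + τ') ω),
          (x t ω, x (t + τ') ω, x (t + (τ' - τ)) ω))) ((e0, e1), (a0, a1, sv))
        = pmfOf μ (ε t) e0 * pmfOf μ (ε (t + τ')) e1 *
          pmfOf μ (fun ω => (x t ω, x (t + τ') ω, x (t + (τ' - τ)) ω)) (a0, a1, sv) :=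
      eps2_fact hμ x ε t τ' hNoise ⟨0, by omega⟩ ⟨τ', by omega⟩
        (by simp only [ne_eq, Fin.mk.injEq]; omega)
        (fun v => (v ⟨0, by omega⟩, v ⟨τ', by omega⟩, v ⟨τ' - τ, by omega⟩)) e0 e1
        (a0, a1, sv)
    have hG2a : pmfOf μ (fun ω => ((x t ω, ε t ω), x (t + (τ' - τ)) ω)) ((a0, e0), sv)
        = pmfOf μ (fun ω => (ε t ω, (x t ω, x (t + (τ' - τ)) ω))) (e0, (a0, sv)) :=
      pmf_congr μ (fun ω => by simp only [Prod.mk.injEq]; tauto)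
    have hG2b : pmfOf μ (fun ω => (ε t ω, (x t ω, x (t + (τ' - τ)) ω))) (e0, (a0, sv))
        = pmfOf μ (ε t) e0 * pmfOf μ (fun ω => (x t ω, x (t + (τ' - τ)) ω)) (a0, sv) :=
      eps1_fact hμ x ε t τ' hNoise ⟨0, by omega⟩
        (fun v => (v ⟨0, by omega⟩, v ⟨τ' - τ, by omega⟩)) e0 (a0, sv)
    have hG3a : pmfOf μ (fun ω => ((x (t + τ') ω, ε (t + τ') ω),
          x (t + (τ' - τ)) ω)) ((a1, e1), sv)
        = pmfOf μ (fun ω => (ε (t + τ') ω,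
            (x (t + τ') ω, x (t + (τ' - τ)) ω))) (e1, (a1, sv)) :=
      pmf_congr μ (fun ω => by simp only [Prod.mk.injEq]; tauto)
    have hG3b : pmfOf μ (fun ω => (ε (t + τ') ω,
          (x (t + τ') ω, x (t + (τ' - τ)) ω))) (e1, (a1, sv))
        = pmfOf μ (ε (t + τ')) e1 *
          pmfOf μ (fun ω => (x (t + τ') ω, x (t + (τ' - τ)) ω)) (a1, sv) :=
      eps1_fact hμ x ε t τ' hNoise ⟨τ', by omega⟩
        (fun v => (v ⟨τ', by omega⟩, v ⟨τ' - τ, by omega⟩)) e1 (a1, sv)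
    have hM2f := cmi_factor hμ M2 a0 a1 sv
    rw [hG1, hG1b, hG2a, hG2b, hG3a, hG3b]
    linear_combination pmfOf μ (ε t) e0 * pmfOf μ (ε (t + τ')) e1 * hM2f
  -- z_t ⊥ (z_{t+τ'}, x_{t+τ'}) | x_s
  have hv : cmi μ (fun ω => f (x t ω) (ε t ω))
      (fun ω => (f (x (t + τ') ω) (ε (t + τ') ω), x (t + τ') ω)) (x (t + (τ' - τ))) = 0 := by
    have vv1 : cmi μ (fun ω => f (x t ω) (ε t ω))
          (fun ω => (f (x (t + τ') ω) (ε (t + τ') ω), x (t + τ') ω)) (x (t + (τ' - τ)))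
        ≤ cmi μ (fun ω => (x t ω, ε t ω))
          (fun ω => (f (x (t + τ') ω) (ε (t + τ') ω), x (t + τ') ω)) (x (t + (τ' - τ))) :=
      cmi_dpi hμ (g := fun p _ => f p.1 p.2) _ (fun ω => rfl)
    have vv2 : cmi μ (fun ω => (x t ω, ε t ω))
          (fun ω => (f (x (t + τ') ω) (ε (t + τ') ω), x (t + τ') ω)) (x (t + (τ' - τ)))
        ≤ cmi μ (fun ω => (x t ω, ε t ω))
          (fun ω => (x (t + τ') ω, ε (t + τ') ω)) (x (t + (τ' - τ))) :=
      cmi_dpi2 hμ (g := fun p _ => (f p.1 p.2, p.1)) _ (fun ω => rfl)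
    have n1 : 0 ≤ cmi μ (fun ω => f (x t ω) (ε t ω))
        (fun ω => (f (x (t + τ') ω) (ε (t + τ') ω), x (t + τ') ω)) (x (t + (τ' - τ))) :=
      cmi_nonneg hμ _ _ _
    linarith
  -- z_t ⊥ x_{t+τ'} | (x_s, z_{t+τ'})
  have hZ3 : cmi μ (fun ω => f (x t ω) (ε t ω)) (x (t + τ'))
      (fun ω => (x (t + (τ' - τ)) ω, f (x (t + τ') ω) (ε (t + τ') ω))) = 0 := by
    have c1 : cmi μ (fun ω => f (x t ω) (ε t ω))
          (fun ω => (f (x (t + τ') ω) (ε (t + τ') ω), x (t + τ') ω)) (x (t + (τ' - τ)))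
        = cmi μ (fun ω => f (x t ω) (ε t ω))
            (fun ω => f (x (t + τ') ω) (ε (t + τ') ω)) (x (t + (τ' - τ)))
          + cmi μ (fun ω => f (x t ω) (ε t ω)) (x (t + τ'))
            (fun ω => (f (x (t + τ') ω) (ε (t + τ') ω), x (t + (τ' - τ)) ω)) :=
      cmi_chain2 hμ0 _ _ _ _
    have c2 : cmi μ (fun ω => f (x t ω) (ε t ω)) (x (t + τ'))
          (fun ω => (x (t + (τ' - τ)) ω, f (x (t + τ') ω) (ε (t + τ') ω)))
        = cmi μ (fun ω => f (x t ω) (ε t ω)) (x (t + τ'))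
          (fun ω => (f (x (t + τ') ω) (ε (t + τ') ω), x (t + (τ' - τ)) ω)) :=
      cmi_congr3 μ (fun ω₁ ω₂ => by simp only [Prod.mk.injEq]; tauto)
    have n1 : 0 ≤ cmi μ (fun ω => f (x t ω) (ε t ω))
        (fun ω => f (x (t + τ') ω) (ε (t + τ') ω)) (x (t + (τ' - τ))) := cmi_nonneg hμ _ _ _
    have n2 : 0 ≤ cmi μ (fun ω => f (x t ω) (ε t ω)) (x (t + τ'))
        (fun ω => (f (x (t + τ') ω) (ε (t + τ') ω), x (t + (τ' - τ)) ω)) :=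
      cmi_nonneg hμ _ _ _
    linarith
  -- I(z_t; x_{t+τ'} | z_{t+τ'}) ≤ I(x_s; x_{t+τ'} | z_{t+τ'})
  have ineqB : cmi μ (fun ω => f (x t ω) (ε t ω)) (x (t + τ'))
        (fun ω => f (x (t + τ') ω) (ε (t + τ') ω))
      ≤ cmi μ (x (t + (τ' - τ))) (x (t + τ'))
        (fun ω => f (x (t + τ') ω) (ε (t + τ') ω)) := by
    have q1 : cmi μ (fun ω => (x (t + (τ' - τ)) ω, f (x t ω) (ε t ω))) (x (t + τ'))
          (fun ω => f (x (t + τ') ω) (ε (t + τ') ω))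
        = cmi μ (x (t + (τ' - τ))) (x (t + τ'))
            (fun ω => f (x (t + τ') ω) (ε (t + τ') ω))
          + cmi μ (fun ω => f (x t ω) (ε t ω)) (x (t + τ'))
            (fun ω => (x (t + (τ' - τ)) ω, f (x (t + τ') ω) (ε (t + τ') ω))) :=
      cmi_chain1 hμ0 _ _ _ _
    have q2 : cmi μ (fun ω => (f (x t ω) (ε t ω), x (t + (τ' - τ)) ω)) (x (t + τ'))
          (fun ω => f (x (t + τ') ω) (ε (t + τ') ω))
        = cmi μ (fun ω => f (x t ω) (ε t ω)) (x (t + τ'))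
            (fun ω => f (x (t + τ') ω) (ε (t + τ') ω))
          + cmi μ (x (t + (τ' - τ))) (x (t + τ'))
            (fun ω => (f (x t ω) (ε t ω), f (x (t + τ') ω) (ε (t + τ') ω))) :=
      cmi_chain1 hμ0 _ _ _ _
    have q3 : cmi μ (fun ω => (x (t + (τ' - τ)) ω, f (x t ω) (ε t ω))) (x (t + τ'))
          (fun ω => f (x (t + τ') ω) (ε (t + τ') ω))
        = cmi μ (fun ω => (f (x t ω) (ε t ω), x (t + (τ' - τ)) ω)) (x (t + τ'))
          (fun ω => f (x (t + τ') ω) (ε (t + τ') ω)) :=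
      cmi_congr μ (fun ω₁ ω₂ => by simp only [Prod.mk.injEq]; tauto)
    have q5 : 0 ≤ cmi μ (x (t + (τ' - τ))) (x (t + τ'))
        (fun ω => (f (x t ω) (ε t ω), f (x (t + τ') ω) (ε (t + τ') ω))) :=
      cmi_nonneg hμ _ _ _
    linarith
  -- I(z_s; z_{t+τ'}) ≤ I(x_s; z_{t+τ'})
  have ineq5 : mi μ (fun ω => f (x (t + (τ' - τ)) ω) (ε (t + (τ' - τ)) ω))
        (fun ω => f (x (t + τ') ω) (ε (t + τ') ω))
      ≤ mi μ (x (t + (τ' - τ))) (fun ω => f (x (t + τ') ω) (ε (t + τ') ω)) := by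
    have r1 : mi μ (fun ω => f (x (t + (τ' - τ)) ω) (ε (t + (τ' - τ)) ω))
          (fun ω => f (x (t + τ') ω) (ε (t + τ') ω))
        ≤ mi μ (fun ω => (x (t + (τ' - τ)) ω, ε (t + (τ' - τ)) ω))
          (fun ω => f (x (t + τ') ω) (ε (t + τ') ω)) :=
      mi_dpi hμ (g := fun p => f p.1 p.2) _ (fun ω => rfl)
    have r2 : mi μ (fun ω => (x (t + (τ' - τ)) ω, ε (t + (τ' - τ)) ω))
          (fun ω => f (x (t + τ') ω) (ε (t + τ') ω))
        = mi μ (fun ω => f (x (t + τ') ω) (ε (t + τ') ω))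
          (fun ω => (x (t + (τ' - τ)) ω, ε (t + (τ' - τ)) ω)) := mi_comm μ _ _
    have r3 : mi μ (fun ω => f (x (t + τ') ω) (ε (t + τ') ω))
          (fun ω => (x (t + (τ' - τ)) ω, ε (t + (τ' - τ)) ω))
        = mi μ (fun ω => f (x (t + τ') ω) (ε (t + τ') ω)) (x (t + (τ' - τ)))
          + cmi μ (fun ω => f (x (t + τ') ω) (ε (t + τ') ω)) (ε (t + (τ' - τ)))
            (x (t + (τ' - τ))) := mi_chain hμ _ _ _
    have r4 : mi μ (ε (t + (τ' - τ)))
          (fun ω => (x (t + (τ' - τ)) ω, f (x (t + τ') ω) (ε (t + τ') ω)))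
        = mi μ (ε (t + (τ' - τ))) (x (t + (τ' - τ)))
          + cmi μ (ε (t + (τ' - τ))) (fun ω => f (x (t + τ') ω) (ε (t + τ') ω))
            (x (t + (τ' - τ))) := mi_chain hμ _ _ _
    have r5 : mi μ (ε (t + (τ' - τ)))
          (fun ω => (x (t + (τ' - τ)) ω, f (x (t + τ') ω) (ε (t + τ') ω)))
        ≤ mi μ (ε (t + (τ' - τ)))
          (fun ω => (ε (t + τ') ω, fun i : Fin (τ' + 1) => x (t + (i : ℕ)) ω)) :=
      mi_dpi2 hμ (g := fun p => (p.2 ⟨τ' - τ, by omega⟩, f (p.2 ⟨τ', by omega⟩) p.1)) _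
        (fun ω => rfl)
    have r7 : cmi μ (fun ω => f (x (t + τ') ω) (ε (t + τ') ω)) (ε (t + (τ' - τ)))
          (x (t + (τ' - τ)))
        = cmi μ (ε (t + (τ' - τ))) (fun ω => f (x (t + τ') ω) (ε (t + τ') ω))
          (x (t + (τ' - τ))) := cmi_comm μ _ _ _
    have r8 : mi μ (fun ω => f (x (t + τ') ω) (ε (t + τ') ω)) (x (t + (τ' - τ)))
        = mi μ (x (t + (τ' - τ))) (fun ω => f (x (t + τ') ω) (ε (t + τ') ω)) := mi_comm μ _ _
    have n1 : 0 ≤ mi μ (ε (t + (τ' - τ))) (x (t + (τ' - τ))) := mi_nonneg hμ _ _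
    have n2 : 0 ≤ cmi μ (ε (t + (τ' - τ))) (fun ω => f (x (t + τ') ω) (ε (t + τ') ω))
        (x (t + (τ' - τ))) := cmi_nonneg hμ _ _ _
    linarith
  -- final assembly
  have cmA : mi μ (x t) (x (t + τ')) = mi μ (x (t + τ')) (x t) := mi_comm μ _ _
  have cmC : mi μ (x (t + τ')) (fun ω => f (x t ω) (ε t ω))
      = mi μ (fun ω => f (x t ω) (ε t ω)) (x (t + τ')) := mi_comm μ _ _
  have cmD : mi μ (x t) (x (t + τ)) = mi μ (x (t + τ)) (x t) := mi_comm μ _ _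
  have cmE : mi μ (x (t + τ)) (fun ω => f (x t ω) (ε t ω))
      = mi μ (fun ω => f (x t ω) (ε t ω)) (x (t + τ)) := mi_comm μ _ _
  linarith
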